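/- arXiv:math/9809108 — 8 statements merged into one kernel-verified Lean document; each statement's English description precedes it below -/
import Mathlib

section
/- Let p and q be primes. The groups PSL₂(ℤ[1/p]) and PSL₂(ℤ[1/q]) are abstractly commensurable, i.e. possess isomorphic finite-index subgroups, if and only if p = q. -/
/-- The subring `ℤ[1/p]` of `ℚ`, i.e. the smallest subring of `ℚ` containing `1/p`;
its elements are exactly the rationals of the form `a / p ^ k` with `a ∈ ℤ`, `k ∈ ℕ`. -/
def ZOneOver (p : ℕ) : Subring ℚ := Subring.closure {((p : ℚ))⁻¹}

/-- `PSL₂(ℤ[1/p])`: the quotient of `SL₂(ℤ[1/p])` by its center. -/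
abbrev PSLZ (p : ℕ) : Type :=
  Matrix.SpecialLinearGroup (Fin 2) (ZOneOver p) ⧸
    Subgroup.center (Matrix.SpecialLinearGroup (Fin 2) (ZOneOver p))

/-- Two groups are abstractly commensurable if they possess isomorphic
finite-index subgroups. -/
def AbstractlyCommensurable (G H : Type*) [Group G] [Group H] : Prop :=
  ∃ (G' : Subgroup G) (H' : Subgroup H),
    G'.FiniteIndex ∧ H'.FiniteIndex ∧ Nonempty (G' ≃* H')

/-!
In `PSL₂(ℤ[1/p])` the image `u` of `!![1, 1; 0, 1]` has infinite order and a `p ^ n`-th root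
`!![1, p⁻ⁿ; 0, 1]` for every `n`. A finite-index subgroup contains a fixed power of every element,
so some power of `u` has both properties inside any finite-index subgroup.

For `q ≠ p` no element of `PSL₂(ℤ[1/q])` has both properties, because `ℤ[1/q]` embeds into `ℤ_[p]`.
In the finite group `SL₂(ℤ/pᵏ)` an element `X` with `p ^ n`-th roots for all `n` has order prime
to `p`, while `Xᶜ`, with `c = #SL₂(𝔽_p)`, lies in the kernel of reduction mod `p`, whose exponent
divides `pᵏ`. So `Xᶜ` is trivial modulo every `pᵏ`, hence trivial.
-/

open MatrixGroups

section Divisible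

variable {G H : Type*} [Group G] [Group H] {p : ℕ}

def IsInfinitelyPDivisible (p : ℕ) (x : G) : Prop := ∀ n : ℕ, ∃ y : G, y ^ p ^ n = x

lemma IsInfinitelyPDivisible.map {x : G} (h : IsInfinitelyPDivisible p x) (f : G →* H) :
    IsInfinitelyPDivisible p (f x) := fun n ↦
  let ⟨y, hy⟩ := h n
  ⟨f y, by rw [← map_pow, hy]⟩

lemma IsInfinitelyPDivisible.subgroupMk_pow {x : G} (h : IsInfinitelyPDivisible p x)
    {K : Subgroup G} {m : ℕ} (hm : ∀ g : G, g ^ m ∈ K) :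
    IsInfinitelyPDivisible p (⟨x ^ m, hm x⟩ : K) := fun n ↦
  let ⟨y, hy⟩ := h n
  ⟨⟨y ^ m, hm y⟩, Subtype.ext <| by rw [SubgroupClass.coe_pow, pow_right_comm, hy]⟩

lemma IsInfinitelyPDivisible.pow_of_mk {N : Subgroup G} [N.Normal] (hN : N ≤ Subgroup.center G)
    {e : ℕ} (he : ∀ z ∈ N, z ^ e = 1) {x : G} (h : IsInfinitelyPDivisible p (x : G ⧸ N)) :
    IsInfinitelyPDivisible p (x ^ e) := by
  intro n
  obtain ⟨y, hy⟩ := h n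
  obtain ⟨Y, rfl⟩ := QuotientGroup.mk_surjective y
  have hz : x⁻¹ * Y ^ p ^ n ∈ N := QuotientGroup.eq.mp hy.symm
  have hcomm : Commute x (x⁻¹ * Y ^ p ^ n) := Subgroup.mem_center_iff.mp (hN hz) x
  refine ⟨Y ^ e, ?_⟩
  calc (Y ^ e) ^ p ^ n = (x * (x⁻¹ * Y ^ p ^ n)) ^ e := by
        rw [← pow_right_comm, mul_inv_cancel_left]
    _ = x ^ e := by rw [hcomm.mul_pow, he _ hz, mul_one]

lemma IsInfinitelyPDivisible.coprime_orderOf [Finite G] (hp : p.Prime) {x : G}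
    (h : IsInfinitelyPDivisible p x) : (orderOf x).Coprime p := by
  obtain ⟨w, rfl⟩ := h (Nat.card G)
  set d := orderOf w
  have hd : d ≠ 0 := (orderOf_pos w).ne'
  have hv : d.factorization p ≤ Nat.card G :=
    ((Nat.factorization_lt p hd).trans_le orderOf_le_card).le
  have hdvd : orderOf (w ^ p ^ Nat.card G) ∣ d / p ^ d.factorization p := by
    refine orderOf_dvd_of_pow_eq_one ?_
    rw [← pow_mul, orderOf_dvd_iff_pow_eq_one.mp]
    calc d = p ^ d.factorization p * (d / p ^ d.factorization p) :=
          (Nat.ordProj_mul_ordCompl_eq_self d p).symm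
      _ ∣ p ^ Nat.card G * (d / p ^ d.factorization p) :=
          Nat.mul_dvd_mul_right (pow_dvd_pow p hv) _
  exact (Nat.coprime_ordCompl hp hd).symm.coprime_dvd_left hdvd

end Divisible

lemma Subgroup.exists_pow_mem_of_finiteIndex {G : Type*} [Group G] (K : Subgroup G)
    [K.FiniteIndex] : ∃ m ≠ 0, ∀ g : G, g ^ m ∈ K :=
  ⟨K.normalCore.index, Subgroup.FiniteIndex.index_ne_zero,
    fun g ↦ K.normalCore_le (K.normalCore.pow_index_mem g)⟩

lemma one_add_natCast_mul_pow_eq_one {A : Type*} [Ring A] {p k : ℕ} (hpk : (p : A) ^ k = 0)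
    (y : A) : (1 + p * y) ^ p ^ k = 1 := by
  -- `dvd_sub_pow_of_dvd_sub` needs commutativity, so apply it in `ℤ[X]` and evaluate at `y`.
  obtain ⟨f, hf⟩ := dvd_sub_pow_of_dvd_sub (R := Polynomial ℤ) (p := p)
    (a := 1 + (p : Polynomial ℤ) * Polynomial.X) (b := 1) (by simp) k
  have := congr_arg (Polynomial.aeval y) hf
  simp only [map_sub, map_pow, map_add, map_one, map_mul, map_natCast, Polynomial.aeval_X, one_pow,
    pow_succ', mul_assoc, hpk, zero_mul, mul_zero] at this
  exact sub_eq_zero.mp this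

lemma ZMod.natCast_dvd_of_castHom_eq_zero {m n : ℕ} (hmn : m ∣ n) {a : ZMod n}
    (ha : ZMod.castHom hmn (ZMod m) a = 0) : (m : ZMod n) ∣ a := by
  obtain ⟨x, rfl⟩ := ZMod.intCast_surjective a
  rw [map_intCast, ZMod.intCast_zmod_eq_zero_iff_dvd] at ha
  simpa using map_dvd (Int.castRingHom (ZMod n)) ha

namespace Matrix.SpecialLinearGroup

variable {n : Type*} [Fintype n] [DecidableEq n]

lemma pow_card_eq_one_of_mem_center {R : Type*} [CommRing R] {z : SpecialLinearGroup n R}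
    (hz : z ∈ Subgroup.center (SpecialLinearGroup n R)) : z ^ Fintype.card n = 1 := by
  obtain ⟨r, hr, hrz⟩ := mem_center_iff.mp hz
  apply Subtype.ext
  rw [coe_pow, ← hrz, ← map_pow, hr, map_one, coe_one]

lemma pow_card_eq_one_of_isInfinitelyPDivisible {p k : ℕ} [Fact p.Prime] (hk : k ≠ 0)
    {M : SpecialLinearGroup n (ZMod (p ^ k))} (hM : IsInfinitelyPDivisible p M) :
    M ^ Nat.card (SpecialLinearGroup n (ZMod p)) = 1 := by
  set c := Nat.card (SpecialLinearGroup n (ZMod p))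
  have hred : map (ZMod.castHom (dvd_pow_self p hk) (ZMod p)) (M ^ c) = 1 := by
    rw [map_pow]
    exact pow_card_eq_one'
  have hcong : ∀ i j, (p : ZMod (p ^ k)) ∣ ((M : Matrix n n (ZMod (p ^ k))) ^ c - 1) i j := by
    intro i j
    refine ZMod.natCast_dvd_of_castHom_eq_zero (dvd_pow_self p hk) ?_
    have := congr_arg (fun B : SpecialLinearGroup n (ZMod p) ↦ (B : Matrix n n (ZMod p)) i j) hred
    simp only [map_apply_coe, RingHom.mapMatrix_apply, Matrix.map_apply, coe_one, coe_pow] at this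
    rw [sub_apply, map_sub, this, one_apply, one_apply, apply_ite (ZMod.castHom _ _), map_one,
      map_zero, sub_self]
  choose N hN using hcong
  have hpk : ((p : Matrix n n (ZMod (p ^ k)))) ^ k = 0 := by
    rw [← Nat.cast_pow]
    ext i j
    simp [Matrix.natCast_apply]
  have hMc : (M : Matrix n n (ZMod (p ^ k))) ^ c = 1 + (p : Matrix n n (ZMod (p ^ k))) * of N := by
    rw [← sub_eq_iff_eq_add']
    ext i j
    rw [hN, ← nsmul_eq_mul (p : ℕ) (of N), smul_apply, of_apply, nsmul_eq_mul]
  have hunip : (M ^ c) ^ p ^ k = 1 := by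
    apply Subtype.ext
    rw [coe_pow, coe_pow, hMc, one_add_natCast_mul_pow_eq_one hpk, coe_one]
  have hcop : (orderOf (M ^ c)).Coprime (p ^ k) :=
    (hM.coprime_orderOf Fact.out).pow_right k |>.coprime_dvd_left (orderOf_pow_dvd c)
  exact orderOf_eq_one_iff.mp (hcop.eq_one_of_dvd (orderOf_dvd_of_pow_eq_one hunip))

section PadicEmbedding

variable {R : Type*} [CommRing R] {p : ℕ} [Fact p.Prime] {f : R →+* ℤ_[p]}

lemma eq_one_of_forall_map_toZModPow_eq_one (hf : Function.Injective f)
    {A : SpecialLinearGroup n R} (hA : ∀ k ≠ 0, map ((PadicInt.toZModPow k).comp f) A = 1) :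
    A = 1 := by
  refine ext _ _ fun i j ↦ ?_
  rw [coe_one]
  refine hf (PadicInt.ext_of_toZModPow.mp fun k ↦ ?_)
  rcases eq_or_ne k 0 with rfl | hk
  · exact Subsingleton.elim (α := ZMod 1) _ _
  · have := congr_arg (fun B : SpecialLinearGroup n (ZMod (p ^ k)) ↦
      (B : Matrix n n (ZMod (p ^ k))) i j) (hA k hk)
    simp only [map_apply_coe, RingHom.mapMatrix_apply, Matrix.map_apply, RingHom.comp_apply,
      coe_one] at this
    rw [this, one_apply, one_apply, apply_ite f, apply_ite (PadicInt.toZModPow k), map_one,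
      map_one, map_zero, map_zero]

lemma isOfFinOrder_of_isInfinitelyPDivisible (hf : Function.Injective f)
    {A : SpecialLinearGroup n R} (hA : IsInfinitelyPDivisible p A) : IsOfFinOrder A :=
  isOfFinOrder_iff_pow_eq_one.mpr ⟨_, Nat.card_pos,
    eq_one_of_forall_map_toZModPow_eq_one hf fun k hk ↦ by
      rw [map_pow]
      exact pow_card_eq_one_of_isInfinitelyPDivisible hk (hA.map _)⟩

lemma isOfFinOrder_of_isInfinitelyPDivisible_mk [Nonempty n] (hf : Function.Injective f)
    {x : SpecialLinearGroup n R ⧸ Subgroup.center (SpecialLinearGroup n R)}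
    (hx : IsInfinitelyPDivisible p x) : IsOfFinOrder x := by
  obtain ⟨A, rfl⟩ := QuotientGroup.mk_surjective x
  have hAn : IsOfFinOrder (A ^ Fintype.card n) := isOfFinOrder_of_isInfinitelyPDivisible hf
    (hx.pow_of_mk le_rfl fun _ ↦ pow_card_eq_one_of_mem_center)
  exact (QuotientGroup.mk' _).isOfFinOrder (hAn.of_pow Fintype.card_ne_zero)

end PadicEmbedding

end Matrix.SpecialLinearGroup

namespace ZOneOver

variable {p q : ℕ}

lemma le_comap_padicIntSubring [Fact p.Prime] (hpq : ¬ p ∣ q) :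
    ZOneOver q ≤ (PadicInt.subring p).comap (Rat.castHom ℚ_[p]) := by
  refine Subring.closure_le.mpr (Set.singleton_subset_iff.mpr ?_)
  rw [SetLike.mem_coe, Subring.mem_comap, PadicInt.mem_subring_iff, map_inv₀, map_natCast,
    norm_inv, Padic.norm_natCast_eq_one_iff.mpr ((Nat.Prime.coprime_iff_not_dvd Fact.out).mpr hpq),
    inv_one]

noncomputable def toPadicInt [Fact p.Prime] (hpq : ¬ p ∣ q) : ZOneOver q →+* ℤ_[p] :=
  (Rat.castHom ℚ_[p]).restrict (ZOneOver q) (PadicInt.subring p) (le_comap_padicIntSubring hpq)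

lemma toPadicInt_injective [Fact p.Prime] (hpq : ¬ p ∣ q) :
    Function.Injective (toPadicInt hpq) := fun _ _ h ↦
  Subtype.ext ((Rat.castHom ℚ_[p]).injective (congr_arg Subtype.val h))

lemma isUnit_natCast (hp : p ≠ 0) : IsUnit (p : ZOneOver p) :=
  .of_mul_eq_one ⟨(p : ℚ)⁻¹, Subring.subset_closure rfl⟩
    (Subtype.ext (mul_inv_cancel₀ (Nat.cast_ne_zero.mpr hp)))

end ZOneOver

section Unipotent

variable {R : Type*} [CommRing R]

def unipotent (t : R) : SL(2, R) := ⟨!![1, t; 0, 1], by simp⟩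

lemma unipotent_zero : unipotent (0 : R) = 1 :=
  Subtype.ext <| by simp [unipotent, Matrix.one_fin_two]

lemma unipotent_add (s t : R) : unipotent (s + t) = unipotent s * unipotent t :=
  Subtype.ext <| by
    rw [Matrix.SpecialLinearGroup.coe_mul]
    simp [unipotent, add_comm]

lemma unipotent_pow (t : R) (m : ℕ) : unipotent t ^ m = unipotent (m * t) := by
  induction m with
  | zero => rw [pow_zero, Nat.cast_zero, zero_mul, unipotent_zero]
  | succ m ih => rw [pow_succ, ih, ← unipotent_add, Nat.cast_succ, add_one_mul]

lemma isInfinitelyPDivisible_unipotent_one {p : ℕ} (hp : IsUnit (p : R)) :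
    IsInfinitelyPDivisible p (unipotent (1 : R)) := fun n ↦
  ⟨unipotent (↑hp.unit⁻¹ ^ n), by
    rw [unipotent_pow, Nat.cast_pow, ← mul_pow, hp.mul_val_inv, one_pow]⟩

lemma not_isOfFinOrder_mk_unipotent_one [CharZero R] :
    ¬ IsOfFinOrder (unipotent (1 : R) : SL(2, R) ⧸ Subgroup.center SL(2, R)) := by
  intro hfin
  obtain ⟨m, hm, hpow⟩ := isOfFinOrder_iff_pow_eq_one.mp hfin
  rw [← QuotientGroup.mk_pow, QuotientGroup.eq_one_iff, unipotent_pow, mul_one,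
    Matrix.SpecialLinearGroup.mem_center_iff] at hpow
  obtain ⟨r, -, hr⟩ := hpow
  have h01 : (0 : R) = m := by simpa [unipotent] using congr_fun₂ hr 0 1
  exact hm.ne' (by exact_mod_cast h01.symm)

end Unipotent

/-- For primes `p` and `q`, the groups `PSL₂(ℤ[1/p])` and `PSL₂(ℤ[1/q])`
are abstractly commensurable if and only if `p = q`. -/
theorem psl2_abstractlyCommensurable_iff (p q : ℕ) (hp : p.Prime) (hq : q.Prime) :
    AbstractlyCommensurable (PSLZ p) (PSLZ q) ↔ p = q := by
  refine ⟨fun ⟨G', H', _, _, ⟨e⟩⟩ ↦ ?_, ?_⟩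
  · by_contra hpq
    have : Fact p.Prime := ⟨hp⟩
    obtain ⟨m, hm0, hm⟩ := G'.exists_pow_mem_of_finiteIndex
    let u : PSLZ p := (unipotent 1 : SL(2, ZOneOver p))
    let ξ : G' := ⟨u ^ m, hm u⟩
    have hdiv : IsInfinitelyPDivisible p ((e ξ : H') : PSLZ q) :=
      ((((isInfinitelyPDivisible_unipotent_one (ZOneOver.isUnit_natCast hp.ne_zero)).map
        (QuotientGroup.mk' _)).subgroupMk_pow hm).map e.toMonoidHom).map H'.subtype
    have hfin := Matrix.SpecialLinearGroup.isOfFinOrder_of_isInfinitelyPDivisible_mk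
      (ZOneOver.toPadicInt_injective ((Nat.prime_dvd_prime_iff_eq hp hq).not.mpr hpq)) hdiv
    rw [← orderOf_pos_iff, Subgroup.orderOf_coe, e.orderOf_eq, ← Subgroup.orderOf_coe,
      orderOf_pos_iff] at hfin
    exact not_isOfFinOrder_mk_unipotent_one (hfin.of_pow hm0)
  · rintro rfl
    exact ⟨⊤, ⊤, inferInstance, inferInstance, ⟨.refl _⟩⟩
end

section
/- Let p be a prime, let Λ ≤ PGL₂(ℚ) be the image of SL₂(ℤ[1/p]) in PGL₂(ℚ), and let S be a finite generating set of Λ with word metric d_S. If g ∈ PGL₂(ℚ) and C ≥ 0 are such that d_S(x, g·x·g⁻¹) ≤ C for every x in the subgroup Λ ∩ g⁻¹Λg, then g is the identity element of PGL₂(ℚ). (The natural map from the commensurator group to the quasi-isometry group of PSL₂(ℤ[1/p]) is injective.) -/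
/-- `PGL₂(ℚ)`: the quotient of `GL₂(ℚ)` by its center. -/
abbrev PGL2Q : Type :=
  Matrix.GeneralLinearGroup (Fin 2) ℚ ⧸ Subgroup.center (Matrix.GeneralLinearGroup (Fin 2) ℚ)

/-- The composite homomorphism `SL₂(ℤ[1/p]) → SL₂(ℚ) → GL₂(ℚ) → PGL₂(ℚ)`. -/
noncomputable def toPGL2Q (p : ℕ) :
    Matrix.SpecialLinearGroup (Fin 2) (ZOneOver p) →* PGL2Q :=
  (QuotientGroup.mk' (Subgroup.center (Matrix.GeneralLinearGroup (Fin 2) ℚ))).comp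
    (Matrix.SpecialLinearGroup.toGL.comp
      (Matrix.SpecialLinearGroup.map (ZOneOver p).subtype))

/-- `Λ ≤ PGL₂(ℚ)`: the image of `SL₂(ℤ[1/p])` in `PGL₂(ℚ)`, isomorphic to
`PSL₂(ℤ[1/p])`. -/
noncomputable def LambdaP (p : ℕ) : Subgroup PGL2Q := (toPGL2Q p).range

/-- The word metric on a group `G` with respect to a finite set `S`:
`wordDist S g h` is the least `n` such that `g⁻¹ * h` is a product of `n` elements
of `S ∪ S⁻¹`. -/
noncomputable def wordDist {G : Type*} [Group G] (S : Finset G) (g h : G) : ℕ :=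
  sInf {n : ℕ | ∃ l : List G, l.length = n ∧ (∀ x ∈ l, x ∈ S ∨ x⁻¹ ∈ S) ∧ l.prod = g⁻¹ * h}

/-! Write `g` as the class of `A ∈ GL₂(ℚ)`. For `i ≠ j`, clearing the denominators of
`A E_ij A⁻¹` gives `b ∈ ℤ ∖ {0}` such that the transvection `u = 1 + b E_ij` lies in `Λ`
together with its `g`-conjugate. The displacements `u⁻ⁿ · g uⁿ g⁻¹` then all lie in the
ball of radius `C` of the word metric, which is finite, so two of them coincide and `g`
commutes in `PGL₂(ℚ)` with a nontrivial power `uᵏ = 1 + kb E_ij`. Lifting to `GL₂(ℚ)`,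
`A uᵏ A⁻¹ = c uᵏ`, and comparing traces forces `c = 1`; so `A` commutes with every `E_ij`,
i.e. `A` is scalar. -/

section WordMetric

variable {G : Type*} [Group G] (S : Finset G)

theorem wordDist_eq_wordDist_one (a b : G) : wordDist S a b = wordDist S 1 (a⁻¹ * b) := by
  simp [wordDist]

theorem finite_setOf_wordDist_one_le (hS : Subgroup.closure (S : Set G) = ⊤) (N : ℕ) :
    {g : G | wordDist S 1 g ≤ N}.Finite := by
  let T : Set G := (S : Set G) ∪ (S : Set G)⁻¹
  have hT : Finite T := (S.finite_toSet.union S.finite_toSet.inv).to_subtype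
  refine ((List.finite_length_le T N).image fun l => (l.map (↑)).prod).subset fun g hg => ?_
  have hne : {n : ℕ | ∃ l : List G, l.length = n ∧ (∀ x ∈ l, x ∈ S ∨ x⁻¹ ∈ S) ∧
      l.prod = 1⁻¹ * g}.Nonempty := by
    have hg : g ∈ Submonoid.closure T := by
      rw [← Subgroup.closure_toSubmonoid, hS]; trivial
    obtain ⟨l, hlT, hl⟩ := Submonoid.exists_list_of_mem_closure hg
    exact ⟨l.length, l, rfl, hlT, by rw [hl, inv_one, one_mul]⟩
  obtain ⟨l, hlen, hlS, hl⟩ := Nat.sInf_mem hne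
  refine ⟨l.attach.map fun x => ⟨x.1, hlS x.1 x.2⟩, ?_, ?_⟩
  · rw [Set.mem_ofPred_eq, List.length_map, List.length_attach, hlen]
    exact hg
  · simp [List.map_map, Function.comp_def, hl]

end WordMetric

theorem exists_zpow_commute_of_wordDist_conj_le {G : Type*} [Group G] {Λ : Subgroup G}
    (S : Finset Λ) (hS : Subgroup.closure (S : Set Λ) = ⊤) {g : G} {C : ℝ}
    (hbd : ∀ (x : G) (hx : x ∈ Λ) (hgx : g * x * g⁻¹ ∈ Λ),
      (wordDist S ⟨x, hx⟩ ⟨g * x * g⁻¹, hgx⟩ : ℝ) ≤ C)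
    {x : G} (hx : x ∈ Λ) (hgx : g * x * g⁻¹ ∈ Λ) :
    ∃ k : ℤ, k ≠ 0 ∧ Commute g (x ^ k) := by
  have hpow (n : ℕ) : x ^ n ∈ Λ := pow_mem hx n
  have hconj (n : ℕ) : g * x ^ n * g⁻¹ ∈ Λ := conj_pow (a := g) ▸ pow_mem hgx n
  let displacement (n : ℕ) : Λ := ⟨x ^ n, hpow n⟩⁻¹ * ⟨g * x ^ n * g⁻¹, hconj n⟩
  have hmaps : Set.MapsTo displacement Set.univ {y | wordDist S 1 y ≤ ⌈C⌉₊} := fun n _ => by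
    rw [Set.mem_ofPred_eq, ← wordDist_eq_wordDist_one]
    exact_mod_cast (hbd _ (hpow n) (hconj n)).trans (Nat.le_ceil C)
  obtain ⟨m, -, n, -, hmn, hdisp⟩ := Set.infinite_univ.exists_ne_map_eq_of_mapsTo hmaps
    (finite_setOf_wordDist_one_le S hS _)
  refine ⟨m - n, sub_ne_zero.mpr (Nat.cast_injective.ne hmn), ?_⟩
  have h : (x ^ m)⁻¹ * (g * x ^ m * g⁻¹) = (x ^ n)⁻¹ * (g * x ^ n * g⁻¹) :=
    congrArg Subtype.val hdisp
  rw [zpow_sub, zpow_natCast, zpow_natCast]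
  calc g * (x ^ m * (x ^ n)⁻¹)
      = x ^ m * ((x ^ m)⁻¹ * (g * x ^ m * g⁻¹)) * g * (x ^ n)⁻¹ := by group
    _ = x ^ m * ((x ^ n)⁻¹ * (g * x ^ n * g⁻¹)) * g * (x ^ n)⁻¹ := by rw [h]
    _ = x ^ m * (x ^ n)⁻¹ * g := by group

open Matrix

theorem Matrix.GeneralLinearGroup.commute_of_commute_mk {n K : Type*} [Fintype n]
    [DecidableEq n] [Field K] {A B : GL n K} (hB : trace (B : Matrix n n K) ≠ 0)
    (h : Commute (A : GL n K ⧸ Subgroup.center (GL n K)) B) : Commute A B := by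
  obtain ⟨z, hz, hAB⟩ : ∃ z ∈ Subgroup.center (GL n K), A * B * z = B * A :=
    QuotientGroup.mk'_eq_mk' _ |>.mp h.eq
  have hconj : z * (A * B * A⁻¹) = B := by
    rw [← mul_assoc, ← Subgroup.mem_center_iff.mp hz, hAB, mul_inv_cancel_right]
  rw [center_eq_range_scalar] at hz
  obtain ⟨c, rfl⟩ := hz
  have hc : c = 1 := by
    have := congrArg (fun M : GL n K => trace (M : Matrix n n K)) hconj
    simp only [Units.val_mul, coe_scalar, scalar_apply, ← smul_eq_diagonal_mul] at this
    rw [trace_smul, trace_units_conj, smul_eq_mul] at this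
    exact Units.val_eq_one.mp (mul_eq_right₀ hB |>.mp this)
  rwa [hc, map_one, mul_one] at hAB

theorem Matrix.commute_single_of_commute_one_add_single {n K : Type*} [Fintype n]
    [DecidableEq n] [Field K] {M : Matrix n n K} {i j : n} {t : K} (ht : t ≠ 0)
    (h : Commute M (1 + single i j t)) : Commute (single i j 1) M := by
  have hM : Commute M (t • single i j 1) := by
    simpa using h.sub_right (Commute.one_right M)
  exact ((Commute.smul_right_iff₀ ht).mp hM).symm

theorem Matrix.SpecialLinearGroup.transvection_zpow {n R : Type*} [Fintype n] [DecidableEq n]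
    [CommRing R] {i j : n} (hij : i ≠ j) (b : R) (k : ℤ) :
    transvection hij b ^ k = transvection hij (k • b) := by
  induction k with
  | zero => simp
  | succ k ih => rw [_root_.zpow_add_one, ih, add_smul, one_smul, transvection_add]
  | pred k ih => rw [_root_.zpow_sub_one, ih, sub_smul, one_smul, sub_eq_add_neg,
      transvection_add, transvection_inv]

theorem Matrix.SpecialLinearGroup.map_transvection {n R S : Type*} [Fintype n] [DecidableEq n]
    [CommRing R] [CommRing S] (f : R →+* S) {i j : n} (hij : i ≠ j) (b : R) :
    map f (transvection hij b) = transvection hij (f b) := by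
  ext k l
  simp [transvection_coe, one_apply, single_apply, apply_ite f]

theorem toPGL2Q_transvection (p : ℕ) {i j : Fin 2} (hij : i ≠ j) (b : ZOneOver p) :
    toPGL2Q p (SpecialLinearGroup.transvection hij b) =
      (SpecialLinearGroup.toGL (SpecialLinearGroup.transvection hij (b : ℚ)) : PGL2Q) := by
  rw [toPGL2Q, MonoidHom.comp_apply, MonoidHom.comp_apply, SpecialLinearGroup.map_transvection]
  rfl

theorem mk_mem_LambdaP (p : ℕ) {A : GL (Fin 2) ℚ}
    (hA : ∀ i j, (A : Matrix (Fin 2) (Fin 2) ℚ) i j ∈ ZOneOver p)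
    (hdet : (A : Matrix (Fin 2) (Fin 2) ℚ).det = 1) : (A : PGL2Q) ∈ LambdaP p := by
  let B : Matrix (Fin 2) (Fin 2) (ZOneOver p) := fun i j => ⟨_, hA i j⟩
  have hB : B.map (ZOneOver p).subtype = A := rfl
  have hBdet : B.det = 1 := Subtype.ext <| by
    rw [← (ZOneOver p).coe_subtype, RingHom.map_det, RingHom.mapMatrix_apply, hB, hdet]; rfl
  exact ⟨⟨B, hBdet⟩, congrArg QuotientGroup.mk (Units.ext hB)⟩

theorem Matrix.GeneralLinearGroup.coe_conj_toGL_transvection {n R : Type*} [Fintype n]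
    [DecidableEq n] [CommRing R] (A : GL n R) {i j : n} (hij : i ≠ j) (c : R) :
    ((A * SpecialLinearGroup.toGL (SpecialLinearGroup.transvection hij c) * A⁻¹ : GL n R) :
        Matrix n n R) =
      1 + c • ((A : Matrix n n R) * single i j 1 * ((A⁻¹ : GL n R) : Matrix n n R)) := by
  simp only [Units.val_mul, SpecialLinearGroup.coe_GL_coe_matrix,
    SpecialLinearGroup.transvection_coe, mul_add, add_mul, mul_one, Units.mul_inv]
  rw [← Matrix.smul_mul, ← Matrix.mul_smul, smul_single, smul_eq_mul, mul_one]

theorem exists_conj_transvection_mem_LambdaP (p : ℕ) (A : GL (Fin 2) ℚ) {i j : Fin 2}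
    (hij : i ≠ j) : ∃ b : ℤ, b ≠ 0 ∧
      (A : PGL2Q) * toPGL2Q p (SpecialLinearGroup.transvection hij b) * (A : PGL2Q)⁻¹ ∈
        LambdaP p := by
  let N : Matrix (Fin 2) (Fin 2) ℚ :=
    (A : Matrix (Fin 2) (Fin 2) ℚ) * single i j 1 * ((A⁻¹ : GL (Fin 2) ℚ) : Matrix _ _ ℚ)
  obtain ⟨⟨b, hb⟩, hbN⟩ :=
    IsLocalization.exist_integer_multiples_of_finite (nonZeroDivisors ℤ)
      fun kl : Fin 2 × Fin 2 => N kl.1 kl.2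
  refine ⟨b, nonZeroDivisors.ne_zero hb, ?_⟩
  rw [toPGL2Q_transvection]
  refine mk_mem_LambdaP p (fun k l => ?_) ?_
  · obtain ⟨z, hz⟩ := hbN (k, l)
    rw [GeneralLinearGroup.coe_conj_toGL_transvection, Matrix.add_apply, Matrix.smul_apply]
    refine add_mem ?_ ?_
    · rw [one_apply]
      split_ifs
      exacts [one_mem _, zero_mem _]
    · rw [SubringClass.coe_intCast, smul_eq_mul, ← zsmul_eq_mul, ← hz, algebraMap_int_eq,
        eq_intCast]
      exact intCast_mem _ z
  · rw [Units.val_mul, Units.val_mul, Matrix.det_units_conj]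
    exact (SpecialLinearGroup.transvection hij _).2

theorem psl2_commensurator_to_qi_injective_general (p : ℕ)
    (S : Finset (LambdaP p)) (hS : Subgroup.closure (S : Set (LambdaP p)) = ⊤)
    (g : PGL2Q) (C : ℝ)
    (hbd : ∀ (x : PGL2Q) (hx : x ∈ LambdaP p) (hgx : g * x * g⁻¹ ∈ LambdaP p),
      (wordDist S ⟨x, hx⟩ ⟨g * x * g⁻¹, hgx⟩ : ℝ) ≤ C) :
    g = 1 := by
  obtain ⟨A, rfl⟩ := QuotientGroup.mk_surjective g
  rw [QuotientGroup.eq_one_iff, GeneralLinearGroup.mem_center_iff_val_mem_range_scalar,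
    mem_range_scalar_iff_commute_single]
  intro i j hij
  obtain ⟨b, hb, hconj⟩ := exists_conj_transvection_mem_LambdaP p A hij
  obtain ⟨k, hk, hcomm⟩ := exists_zpow_commute_of_wordDist_conj_le S hS hbd ⟨_, rfl⟩ hconj
  rw [← map_zpow, SpecialLinearGroup.transvection_zpow, toPGL2Q_transvection] at hcomm
  refine commute_single_of_commute_one_add_single ?_
    (GeneralLinearGroup.commute_of_commute_mk ?_ hcomm).units_val
  · simp [hk, hb]
  · simp [SpecialLinearGroup.transvection_coe, trace_single_eq_of_ne _ _ _ hij]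

/-- If `g ∈ PGL₂(ℚ)` and `C ≥ 0` are such that
`d_S(x, g x g⁻¹) ≤ C` for every `x ∈ Λ ∩ g⁻¹Λg`, then `g = 1`: the natural map from
the commensurator group to the quasi-isometry group of `PSL₂(ℤ[1/p])` is injective. -/
theorem psl2_commensurator_to_qi_injective (p : ℕ) (hp : p.Prime)
    (S : Finset (LambdaP p)) (hS : Subgroup.closure (S : Set (LambdaP p)) = ⊤)
    (g : PGL2Q) (C : ℝ) (hC : 0 ≤ C)
    (hbd : ∀ (x : PGL2Q) (hx : x ∈ LambdaP p) (hgx : g * x * g⁻¹ ∈ LambdaP p),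
      (wordDist S ⟨x, hx⟩ ⟨g * x * g⁻¹, hgx⟩ : ℝ) ≤ C) :
    g = 1 :=
  psl2_commensurator_to_qi_injective_general p S hS g C hbd
end

section
/- Let p be a prime and let Λ ≤ GL₂(ℚ) be the subgroup consisting of determinant-1 matrices all of whose entries lie in ℤ[1/p] (the image of SL₂(ℤ[1/p]) in GL₂(ℚ)). Then for every a ∈ GL₂(ℚ), the conjugate subgroup aΛa⁻¹ is commensurable with Λ: aΛa⁻¹ ∩ Λ has finite index in both aΛa⁻¹ and Λ. -/
/-- `Λ ≤ GL₂(ℚ)`: the image of `SL₂(ℤ[1/p])` in `GL₂(ℚ)`, i.e. the subgroup of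
determinant-1 matrices all of whose entries lie in `ℤ[1/p]`. -/
noncomputable def LambdaGL (p : ℕ) : Subgroup (Matrix.GeneralLinearGroup (Fin 2) ℚ) :=
  (Matrix.SpecialLinearGroup.toGL.comp
    (Matrix.SpecialLinearGroup.map (ZOneOver p).subtype)).range

/-!
Let `d` be a common denominator, prime to `p`, of the entries of `a` and `a⁻¹`. If
`g ∈ SL₂(ℤ[1/p])` and `g ≡ 1 mod d²`, say `g = 1 + d² Y`, then
`a⁻¹ g a = 1 + (d a⁻¹) Y (d a)` again has entries in `ℤ[1/p]`, so `g ∈ aΛa⁻¹`.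
Hence `aΛa⁻¹ ∩ Λ` contains the principal congruence subgroup of level `d²`, which has
finite index in `Λ` because `ℤ → ℤ[1/p]/(d²)` is onto when `p ∤ d`. Applying this to `a⁻¹`
and conjugating by `a` bounds the other index.
-/

open Matrix SpecialLinearGroup

theorem Subgroup.commensurable_map_conj_of_forall_relIndex_ne_zero {G : Type*} [Group G]
    {H : Subgroup G} (h : ∀ g : G, (H.map (MulAut.conj g).toMonoidHom).relIndex H ≠ 0)
    (g : G) : (H.map (MulAut.conj g).toMonoidHom).Commensurable H := by
  refine ⟨h g, ?_⟩
  have hcomap : H.comap (MulAut.conj g).toMonoidHom = H.map (MulAut.conj g⁻¹).toMonoidHom := by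
    rw [map_inv, MulAut.inv_def]
    exact (Subgroup.map_equiv_eq_comap_symm (MulAut.conj g).symm H).symm
  rw [← Subgroup.relIndex_comap, hcomap]
  exact h g⁻¹

theorem Matrix.SpecialLinearGroup.exists_eq_one_add_smul_of_mem_ker_map_quotient {n R : Type*}
    [Fintype n] [DecidableEq n] [CommRing R] {c : R} {g : SpecialLinearGroup n R}
    (hg : g ∈ (SpecialLinearGroup.map (Ideal.Quotient.mk (Ideal.span {c}))).ker) :
    ∃ Y : Matrix n n R, (g : Matrix n n R) = 1 + c • Y := by
  have hentry (i j : n) : c ∣ (g : Matrix n n R) i j - (1 : Matrix n n R) i j := by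
    rw [← Ideal.mem_span_singleton, ← Ideal.Quotient.eq]
    have hg1 : SpecialLinearGroup.map (Ideal.Quotient.mk (Ideal.span {c})) g = 1 := hg
    simpa [Matrix.one_apply, apply_ite] using (SpecialLinearGroup.ext_iff _ _).mp hg1 i j
  choose Y hY using hentry
  exact ⟨Matrix.of Y, by ext i j; simp [← hY]⟩

section
variable {n K : Type*} [Fintype n] [DecidableEq n] [CommRing K] (R : Subring K)

theorem Subring.mem_range_mapMatrix_subtype_iff {A : Matrix n n K} :
    A ∈ R.subtype.mapMatrix.range ↔ ∀ i j, A i j ∈ R := by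
  refine ⟨?_, fun h => ⟨Matrix.of fun i j => ⟨A i j, h i j⟩, rfl⟩⟩
  rintro ⟨B, rfl⟩ i j
  exact (B i j).2

theorem Matrix.SpecialLinearGroup.coe_mapGL_subring (g : SpecialLinearGroup n R) :
    ((mapGL K g : GL n K) : Matrix n n K) = R.subtype.mapMatrix g :=
  rfl

theorem Matrix.SpecialLinearGroup.mapGL_mem_map_conj_of_eq_one_add_sq_smul (b : GL n K) {d : R}
    (hb : (d : K) • (b : Matrix n n K) ∈ R.subtype.mapMatrix.range)
    (hb' : (d : K) • ((b⁻¹ : GL n K) : Matrix n n K) ∈ R.subtype.mapMatrix.range)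
    {g : SpecialLinearGroup n R} {Y : Matrix n n R} (hg : (g : Matrix n n R) = 1 + d ^ 2 • Y) :
    mapGL K g ∈ (mapGL K : SpecialLinearGroup n R →* GL n K).range.map
      (MulAut.conj b).toMonoidHom := by
  set S : Subring (Matrix n n K) := (R.subtype.mapMatrix : Matrix n n R →+* Matrix n n K).range
  set h := (MulAut.conj b).symm (mapGL K g)
  have hh : (h : Matrix n n K) =
      ((b⁻¹ : GL n K) : Matrix n n K) * R.subtype.mapMatrix g * (b : Matrix n n K) := by
    simp only [h, MulAut.conj_symm_apply, Units.val_mul, coe_mapGL_subring]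
  obtain ⟨m, hm⟩ : (h : Matrix n n K) ∈ S := by
    have hG : R.subtype.mapMatrix g = 1 + (d : K) ^ 2 • R.subtype.mapMatrix Y := by
      rw [hg, map_add, map_one]
      ext i j
      simp
    have hconj : ((b⁻¹ : GL n K) : Matrix n n K) * ((d : K) ^ 2 • R.subtype.mapMatrix Y) * b =
        ((d : K) • ((b⁻¹ : GL n K) : Matrix n n K)) * R.subtype.mapMatrix Y *
          ((d : K) • b) := by
      simp only [Matrix.mul_smul, Matrix.smul_mul, smul_smul, pow_two]
    rw [hh, hG, Matrix.mul_add, Matrix.add_mul, Matrix.mul_one, Units.inv_mul, hconj]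
    exact S.add_mem S.one_mem (S.mul_mem (S.mul_mem hb' ⟨Y, rfl⟩) hb)
  have hdet : m.det = 1 := by
    apply R.subtype_injective
    rw [RingHom.map_det, hm, hh, det_units_conj', ← RingHom.map_det, g.det_coe]
  rw [Subgroup.mem_map_equiv]
  exact ⟨⟨m, hdet⟩, Units.ext hm⟩

theorem Matrix.SpecialLinearGroup.relIndex_map_conj_range_mapGL_ne_zero (b : GL n K) (d : R)
    (hb : (d : K) • (b : Matrix n n K) ∈ R.subtype.mapMatrix.range)
    (hb' : (d : K) • ((b⁻¹ : GL n K) : Matrix n n K) ∈ R.subtype.mapMatrix.range)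
    [Finite (R ⧸ Ideal.span {d ^ 2})] :
    (((mapGL K : SpecialLinearGroup n R →* GL n K).range.map
      (MulAut.conj b).toMonoidHom).relIndex
      (mapGL K : SpecialLinearGroup n R →* GL n K).range) ≠ 0 := by
  rw [← Subgroup.index_comap]
  have hle : (SpecialLinearGroup.map (Ideal.Quotient.mk (Ideal.span {d ^ 2}))).ker ≤
      ((mapGL K : SpecialLinearGroup n R →* GL n K).range.map
        (MulAut.conj b).toMonoidHom).comap (mapGL K) := fun g hg => by
    obtain ⟨Y, hY⟩ := exists_eq_one_add_smul_of_mem_ker_map_quotient hg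
    exact mapGL_mem_map_conj_of_eq_one_add_sq_smul R b hb hb' hY
  exact (Subgroup.finiteIndex_of_le hle).index_ne_zero

end

namespace ZOneOver

variable {p : ℕ}

theorem intCast_div_pow_mem (a : ℤ) (k : ℕ) : (a : ℚ) / (p : ℚ) ^ k ∈ ZOneOver p := by
  have hinv : (p : ℚ)⁻¹ ∈ ZOneOver p := Subring.subset_closure (Set.mem_singleton _)
  rw [div_eq_mul_inv, ← inv_pow]
  exact Subring.mul_mem _ (intCast_mem _ a) (Subring.pow_mem _ hinv k)

theorem exists_eq_intCast_div_pow (hp : p ≠ 0) {x : ℚ} (hx : x ∈ ZOneOver p) :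
    ∃ (a : ℤ) (k : ℕ), x = a / (p : ℚ) ^ k := by
  have hpQ : (p : ℚ) ≠ 0 := Nat.cast_ne_zero.mpr hp
  induction hx using Subring.closure_induction with
  | mem x hx => exact ⟨1, 1, by simp [Set.mem_singleton_iff.mp hx]⟩
  | one => exact ⟨1, 0, by simp⟩
  | zero => exact ⟨0, 0, by simp⟩
  | add x y _ _ hx hy =>
    obtain ⟨a, k, rfl⟩ := hx
    obtain ⟨b, l, rfl⟩ := hy
    exact ⟨a * p ^ l + b * p ^ k, k + l, by push_cast; field_simp; ring⟩
  | neg x _ hx =>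
    obtain ⟨a, k, rfl⟩ := hx
    exact ⟨-a, k, by push_cast; ring⟩
  | mul x y _ _ hx hy =>
    obtain ⟨a, k, rfl⟩ := hx
    obtain ⟨b, l, rfl⟩ := hy
    exact ⟨a * b, k + l, by push_cast; field_simp; ring⟩

theorem exists_coprime_mul_mem (hp : p.Prime) (q : ℚ) :
    ∃ c : ℕ, p.Coprime c ∧ (c : ℚ) * q ∈ ZOneOver p := by
  set c := ordCompl[p] q.den
  set v := q.den.factorization p
  refine ⟨c, Nat.coprime_ordCompl hp q.den_nz, ?_⟩
  have hden : (p : ℚ) ^ v * c = q.den := by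
    exact_mod_cast Nat.ordProj_mul_ordCompl_eq_self q.den p
  have hpv : (p : ℚ) ^ v ≠ 0 := pow_ne_zero _ (Nat.cast_ne_zero.mpr hp.ne_zero)
  have hcq : (c : ℚ) * q = q.num / (p : ℚ) ^ v := by
    rw [eq_div_iff hpv]
    calc (c : ℚ) * q * p ^ v = q * (p ^ v * c) := by ring
      _ = q.num := by rw [hden, Rat.mul_den_eq_num]
  rw [hcq]
  exact intCast_div_pow_mem q.num v

theorem exists_coprime_smul_mem_range_mapMatrix {ι n : Type*} [Fintype ι] [Fintype n]
    [DecidableEq n] (hp : p.Prime) (A : ι → Matrix n n ℚ) :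
    ∃ c : ℕ, p.Coprime c ∧
      ∀ l, (c : ℚ) • A l ∈ (ZOneOver p).subtype.mapMatrix.range := by
  choose c hcop hc using fun x : ι × n × n => exists_coprime_mul_mem hp (A x.1 x.2.1 x.2.2)
  refine ⟨∏ x, c x, Nat.Coprime.prod_right fun x _ => hcop x, fun l => ?_⟩
  rw [Subring.mem_range_mapMatrix_subtype_iff]
  intro i j
  obtain ⟨k, hk⟩ := Finset.dvd_prod_of_mem c (Finset.mem_univ (l, i, j))
  rw [Matrix.smul_apply, smul_eq_mul, hk, Nat.cast_mul, mul_right_comm]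
  exact mul_mem (hc (l, i, j)) (natCast_mem _ k)

theorem exists_intCast_sub_mem_span (hp : p ≠ 0) {N : ℕ} (hN : p.Coprime N) (x : ZOneOver p) :
    ∃ m : ℤ, x - m ∈ Ideal.span {(N : ZOneOver p)} := by
  obtain ⟨a, k, hx⟩ := exists_eq_intCast_div_pow hp x.2
  obtain ⟨u, v, huv⟩ := Nat.isCoprime_iff_coprime.mpr (hN.pow_left k)
  refine ⟨a * u, Ideal.mem_span_singleton'.mpr ⟨⟨_, intCast_div_pow_mem (a * v) k⟩, ?_⟩⟩
  have hpQ : (p : ℚ) ^ k ≠ 0 := pow_ne_zero _ (Nat.cast_ne_zero.mpr hp)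
  have huvQ : (u : ℚ) * p ^ k + v * N = 1 := by exact_mod_cast huv
  ext
  push_cast
  rw [hx]
  field_simp
  linear_combination (a : ℚ) * huvQ

theorem finite_quotient_span_natCast (hp : p ≠ 0) {N : ℕ} [NeZero N] (hN : p.Coprime N) :
    Finite (ZOneOver p ⧸ Ideal.span {(N : ZOneOver p)}) := by
  let f : ZMod N →+ ZOneOver p ⧸ Ideal.span {(N : ZOneOver p)} :=
    ZMod.lift N ⟨Int.castAddHom _, by
      simpa using Ideal.Quotient.eq_zero_iff_mem.mpr
        (Ideal.mem_span_singleton_self (N : ZOneOver p))⟩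
  refine Finite.of_surjective f fun y => ?_
  obtain ⟨x, rfl⟩ := Ideal.Quotient.mk_surjective y
  obtain ⟨m, hm⟩ := exists_intCast_sub_mem_span hp hN x
  refine ⟨m, ?_⟩
  rw [ZMod.lift_coe]
  show ((m : ℤ) : ZOneOver p ⧸ Ideal.span {(N : ZOneOver p)}) = _
  rw [← map_intCast (Ideal.Quotient.mk (Ideal.span {(N : ZOneOver p)}))]
  exact (Ideal.Quotient.eq.mpr hm).symm

end ZOneOver

/-- For every `a ∈ GL₂(ℚ)`, the conjugate `aΛa⁻¹` is commensurable with
`Λ = SL₂(ℤ[1/p]) ≤ GL₂(ℚ)`: their intersection has finite index in both. -/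
theorem conj_lambda_commensurable (p : ℕ) (hp : p.Prime)
    (a : Matrix.GeneralLinearGroup (Fin 2) ℚ) :
    Subgroup.Commensurable ((LambdaGL p).map (MulAut.conj a).toMonoidHom) (LambdaGL p) := by
  refine Subgroup.commensurable_map_conj_of_forall_relIndex_ne_zero (fun b => ?_) a
  obtain ⟨c, hc, hcb⟩ := ZOneOver.exists_coprime_smul_mem_range_mapMatrix hp
    ![(b : Matrix (Fin 2) (Fin 2) ℚ), ((b⁻¹ : GL (Fin 2) ℚ) : Matrix (Fin 2) (Fin 2) ℚ)]
  have hcop : p.Coprime (c ^ 2) := hc.pow_right 2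
  have : NeZero (c ^ 2) := ⟨fun h => hp.one_lt.ne' (by simpa [h] using hcop)⟩
  have : Finite (ZOneOver p ⧸ Ideal.span {(c : ZOneOver p) ^ 2}) := by
    simpa using ZOneOver.finite_quotient_span_natCast hp.ne_zero hcop
  exact relIndex_map_conj_range_mapGL_ne_zero (ZOneOver p) b c (by simpa using hcb 0)
    (by simpa using hcb 1)
end

section
/- Let p be a prime, let G = PGL₂(ℝ) × PGL₂(ℚ_p), and let Γ ≤ G be the image of SL₂(ℤ[1/p]) under the diagonal map M ↦ (M, M). Suppose b ∈ PGL₂(ℚ_p) lies in the image of GL₂(ℚ) under the map GL₂(ℚ) → GL₂(ℚ_p) → PGL₂(ℚ_p), and suppose the element (1, b) ∈ G commensurates Γ, i.e. (1,b)·Γ·(1,b)⁻¹ and Γ are commensurable subgroups of G. Then b = 1. -/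
/-- `PGL₂(ℝ)`: the quotient of `GL₂(ℝ)` by its center. -/
abbrev PGL2R : Type :=
  Matrix.GeneralLinearGroup (Fin 2) ℝ ⧸ Subgroup.center (Matrix.GeneralLinearGroup (Fin 2) ℝ)

/-- `PGL₂(ℚ_p)`: the quotient of `GL₂(ℚ_p)` by its center. -/
abbrev PGL2Qp (p : ℕ) [Fact p.Prime] : Type :=
  Matrix.GeneralLinearGroup (Fin 2) ℚ_[p] ⧸
    Subgroup.center (Matrix.GeneralLinearGroup (Fin 2) ℚ_[p])

/-- The homomorphism `SL₂(ℤ[1/p]) → PGL₂(ℝ)` induced by `ℤ[1/p] ⊂ ℚ ⊂ ℝ`. -/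
noncomputable def slToPGLR (p : ℕ) :
    Matrix.SpecialLinearGroup (Fin 2) (ZOneOver p) →* PGL2R :=
  (QuotientGroup.mk' (Subgroup.center (Matrix.GeneralLinearGroup (Fin 2) ℝ))).comp
    (Matrix.SpecialLinearGroup.toGL.comp
      (Matrix.SpecialLinearGroup.map ((Rat.castHom ℝ).comp (ZOneOver p).subtype)))

/-- The homomorphism `SL₂(ℤ[1/p]) → PGL₂(ℚ_p)` induced by `ℤ[1/p] ⊂ ℚ ⊂ ℚ_p`. -/
noncomputable def slToPGLQp (p : ℕ) [Fact p.Prime] :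
    Matrix.SpecialLinearGroup (Fin 2) (ZOneOver p) →* PGL2Qp p :=
  (QuotientGroup.mk' (Subgroup.center (Matrix.GeneralLinearGroup (Fin 2) ℚ_[p]))).comp
    (Matrix.SpecialLinearGroup.toGL.comp
      (Matrix.SpecialLinearGroup.map ((Rat.castHom ℚ_[p]).comp (ZOneOver p).subtype)))

/-- `Γ`: the image of `SL₂(ℤ[1/p])` in `PGL₂(ℝ) × PGL₂(ℚ_p)` under the diagonal
embedding `M ↦ (M, M)`. -/
noncomputable def GammaP (p : ℕ) [Fact p.Prime] : Subgroup (PGL2R × PGL2Qp p) :=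
  ((slToPGLR p).prod (slToPGLQp p)).range

/-- The homomorphism `GL₂(ℚ) → GL₂(ℚ_p) → PGL₂(ℚ_p)`. -/
noncomputable def glqToPGLQp (p : ℕ) [Fact p.Prime] :
    Matrix.GeneralLinearGroup (Fin 2) ℚ →* PGL2Qp p :=
  (QuotientGroup.mk' (Subgroup.center (Matrix.GeneralLinearGroup (Fin 2) ℚ_[p]))).comp
    (Matrix.GeneralLinearGroup.map (Rat.castHom ℚ_[p]))


/-
Let `K ≤ SL₂(ℤ[1/p])` be the preimage of `(1, b) Γ (1, b)⁻¹` under the diagonal map; it has finite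
index. For `M ∈ K` there is `N` with `N = M` in `PGL₂(ℝ)` and `b N b⁻¹ = M` in `PGL₂(ℚ_p)`. The maps
from `SL₂(ℤ[1/p])` to `PGL₂(ℝ)` and to `PGL₂(ℚ_p)` have the same kernel, the scalar matrices, so
`N = M` in `PGL₂(ℚ_p)` as well: `b` centralises the image of `K`. Now `K` contains a power `k ≥ 1`
of every elementary transvection. A lift `C ∈ GL₂(ℚ_p)` of `b` commutes with `1 + k E_ij` up to a
scalar, and comparing traces forces that scalar to be `1`. A matrix commuting with all `1 + k E_ij`
is scalar, hence `b = 1`.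
-/

theorem MonoidHom.commute_of_mem_comap_map_conj {G H₁ H₂ : Type*} [Group G] [Group H₁]
    [Group H₂] {f : G →* H₁} {g : G →* H₂} (hker : f.ker ≤ g.ker) {b : H₂} {M : G}
    (hM : M ∈ ((f.prod g).range.map (MulAut.conj ((1 : H₁), b)).toMonoidHom).comap (f.prod g)) :
    Commute b (g M) := by
  obtain ⟨_, ⟨N, rfl⟩, hNM⟩ := Subgroup.mem_map.mp (Subgroup.mem_comap.mp hM)
  simp only [MulEquiv.coe_toMonoidHom, MulAut.conj_apply, MonoidHom.prod_apply, Prod.ext_iff,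
    Prod.fst_mul, Prod.snd_mul, Prod.fst_inv, Prod.snd_inv, one_mul, inv_one, mul_one] at hNM
  have hgNM : g N = g M := g.eq_iff.mpr (hker (f.eq_iff.mp hNM.1))
  rw [hgNM] at hNM
  exact mul_inv_eq_iff_eq_mul.mp hNM.2

namespace Matrix

variable {n : Type*} [Fintype n] [DecidableEq n]

theorem map_mem_range_scalar_iff {R S : Type*} [CommRing R] [CommRing S] {f : R →+* S}
    (hf : Function.Injective f) {A : Matrix n n R} :
    A.map f ∈ Set.range (scalar n) ↔ A ∈ Set.range (scalar n) := by
  simp only [mem_range_scalar_iff_commute_single']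
  refine forall₂_congr fun i j => ?_
  have hsingle : (single i j (1 : R)).map f = single i j 1 := by simp [map_single]
  rw [Commute, SemiconjBy, Commute, SemiconjBy, ← (Matrix.map_injective hf).eq_iff,
    Matrix.map_mul, Matrix.map_mul, hsingle]

theorem trace_transvection {R : Type*} [CommRing R] {i j : n} (hij : i ≠ j) (c : R) :
    trace (transvection i j c) = Fintype.card n := by
  simp [transvection, trace_single_eq_of_ne _ _ _ hij]

theorem mem_range_scalar_of_commute_transvection {F : Type*} [Field F] {M : Matrix n n F}
    {c : F} (hc : c ≠ 0) (hM : ∀ i j, i ≠ j → Commute (transvection i j c) M) :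
    M ∈ Set.range (scalar n) := by
  refine mem_range_scalar_of_commute_single fun i j hij => ?_
  have hsingle : Commute (single i j c) M := by
    simpa [transvection] using (hM i j hij).sub_left (Commute.one_left M)
  simpa [smul_single, hc] using hsingle.smul_left c⁻¹

namespace GeneralLinearGroup

theorem commute_of_commute_mk_s7 {F : Type*} [Field F] {C W : GL n F}
    (h : Commute (QuotientGroup.mk' (Subgroup.center (GL n F)) C)
      (QuotientGroup.mk' (Subgroup.center (GL n F)) W))
    (htr : trace (W : Matrix n n F) ≠ 0) : Commute C W := by
  have hmk : QuotientGroup.mk' (Subgroup.center (GL n F)) (C * W) =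
      QuotientGroup.mk' (Subgroup.center (GL n F)) (W * C) := by
    simpa only [map_mul] using h.eq
  obtain ⟨z, hz, hCWz⟩ := (QuotientGroup.mk'_eq_mk' _).mp hmk
  obtain ⟨r, hr⟩ := mem_center_iff_val_mem_range_scalar.mp hz
  have hconj : C * (W * z) * C⁻¹ = W := by rw [← mul_assoc, hCWz, mul_inv_cancel_right]
  -- conjugation preserves the trace, so the central factor `r` is `1`
  have htrace : r * trace (W : Matrix n n F) = trace (W : Matrix n n F) := by
    have := congrArg (fun u : GL n F => trace (u : Matrix n n F)) hconj
    rwa [Units.val_mul, Units.val_mul, trace_units_conj, Units.val_mul, ← hr, scalar_apply,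
      ← smul_eq_mul_diagonal, trace_smul, smul_eq_mul] at this
  have hz1 : z = 1 := by
    have hr1 : r = 1 := by simpa [htr] using htrace
    ext : 1
    simp [← hr, hr1]
  rwa [hz1, mul_one] at hCWz

end GeneralLinearGroup

namespace SpecialLinearGroup

variable {R S : Type*} [CommRing R] [CommRing S]

theorem transvection_pow {i j : n} (hij : i ≠ j) (b : R) (k : ℕ) :
    transvection hij b ^ k = transvection hij (k * b) := by
  induction k with
  | zero => simp
  | succ k ih => rw [pow_succ, ih, ← transvection_add]; push_cast; ring_nf

theorem map_transvection_s7 (f : R →+* S) {i j : n} (hij : i ≠ j) (b : R) :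
    map f (transvection hij b) = transvection hij (f b) := by
  ext k l
  simp only [map_apply_coe, RingHom.mapMatrix_apply, transvection_coe, Matrix.map_apply,
    add_apply, single_apply, one_apply, map_add]
  split_ifs <;> simp

noncomputable def mapToPGL (f : R →+* S) :
    SpecialLinearGroup n R →* GL n S ⧸ Subgroup.center (GL n S) :=
  (QuotientGroup.mk' _).comp (toGL.comp (map f))

theorem mem_ker_mapToPGL_iff {f : R →+* S} (hf : Function.Injective f)
    {A : SpecialLinearGroup n R} :
    A ∈ (mapToPGL f).ker ↔ (A : Matrix n n R) ∈ Set.range (scalar n) := by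
  rw [MonoidHom.mem_ker, mapToPGL, MonoidHom.comp_apply, QuotientGroup.mk'_apply,
    QuotientGroup.eq_one_iff, GeneralLinearGroup.mem_center_iff_val_mem_range_scalar]
  exact map_mem_range_scalar_iff hf

theorem ker_mapToPGL_eq {T : Type*} [CommRing T] {f : R →+* S} {g : R →+* T}
    (hf : Function.Injective f) (hg : Function.Injective g) :
    (mapToPGL (n := n) f).ker = (mapToPGL g).ker := by
  ext A
  rw [mem_ker_mapToPGL_iff hf, mem_ker_mapToPGL_iff hg]

theorem eq_one_of_forall_commute_mapToPGL {F : Type*} [Field F] [CharZero F] (f : R →+* F)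
    {K : Subgroup (SpecialLinearGroup n R)} [K.FiniteIndex]
    {b : GL n F ⧸ Subgroup.center (GL n F)} (hb : ∀ M ∈ K, Commute b (mapToPGL f M)) :
    b = 1 := by
  obtain ⟨C, rfl⟩ := QuotientGroup.mk'_surjective _ b
  set k := K.normalCore.index
  have hk : (k : F) ≠ 0 := Nat.cast_ne_zero.mpr Subgroup.FiniteIndex.index_ne_zero
  have hC : ∀ i j, i ≠ j → Commute (Matrix.transvection i j (k : F)) (C : Matrix n n F) := by
    intro i j hij
    have hmem : transvection hij (1 : R) ^ k ∈ K :=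
      K.normalCore_le (K.normalCore.pow_index_mem _)
    have hmap : mapToPGL f (transvection hij (1 : R) ^ k) =
        QuotientGroup.mk' _ (toGL (transvection hij (k : F))) := by
      rw [mapToPGL, MonoidHom.comp_apply, MonoidHom.comp_apply, map_pow, map_transvection_s7,
        transvection_pow, map_one, mul_one]
    have htr : trace (transvection hij (k : F) : Matrix n n F) ≠ 0 := by
      have : Nonempty n := ⟨i⟩
      rw [transvection_coe, ← Matrix.transvection, trace_transvection hij]
      exact Nat.cast_ne_zero.mpr Fintype.card_ne_zero
    have hcomm := hb _ hmem
    rw [hmap] at hcomm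
    exact (GeneralLinearGroup.commute_of_commute_mk_s7 hcomm htr).units_val.symm
  obtain ⟨r, hr⟩ := mem_range_scalar_of_commute_transvection hk hC
  exact (QuotientGroup.eq_one_iff C).mpr
    (GeneralLinearGroup.mem_center_iff_val_mem_range_scalar.mpr ⟨r, hr⟩)

end SpecialLinearGroup

end Matrix

theorem id_cross_b_commensurates_gamma_general (p : ℕ) [Fact p.Prime]
    (b : PGL2Qp p)
    (hcomm : Subgroup.Commensurable
      ((GammaP p).map (MulAut.conj ((1 : PGL2R), b)).toMonoidHom) (GammaP p)) :
    b = 1 := by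
  set φ := (slToPGLR p).prod (slToPGLQp p)
  -- `slToPGLR p` and `slToPGLQp p` are `mapToPGL` of the embeddings of `ℤ[1/p]` into `ℝ` and `ℚ_p`
  have hker : (slToPGLR p).ker ≤ (slToPGLQp p).ker :=
    (Matrix.SpecialLinearGroup.ker_mapToPGL_eq (Rat.cast_injective.comp Subtype.val_injective)
      (Rat.cast_injective.comp Subtype.val_injective)).le
  have hK : ((φ.range.map (MulAut.conj ((1 : PGL2R), b)).toMonoidHom).comap φ).FiniteIndex :=
    ⟨by rw [Subgroup.index_comap]; exact hcomm.1⟩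
  exact Matrix.SpecialLinearGroup.eq_one_of_forall_commute_mapToPGL _
    fun M hM => MonoidHom.commute_of_mem_comap_map_conj hker hM

/-- If `b ∈ PGL₂(ℚ_p)` lies in the image of `GL₂(ℚ)` and the element
`(1, b)` of `PGL₂(ℝ) × PGL₂(ℚ_p)` commensurates the diagonally embedded
`Γ = PSL₂(ℤ[1/p])`, then `b = 1`. -/
theorem id_cross_b_commensurates_gamma (p : ℕ) [Fact p.Prime]
    (b : PGL2Qp p) (hb : b ∈ (glqToPGLQp p).range)
    (hcomm : Subgroup.Commensurable
      ((GammaP p).map (MulAut.conj ((1 : PGL2R), b)).toMonoidHom) (GammaP p)) :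
    b = 1 :=
  id_cross_b_commensurates_gamma_general p b hcomm
end

section
/- Let p be a prime and let φ: ℚ → ℚ be a bijection that is K₀-bilipschitz for the real absolute value and for the p-adic absolute value (i.e. K₀⁻¹|x−y| ≤ |φ(x)−φ(y)| ≤ K₀|x−y| and K₀⁻¹|x−y|_p ≤ |φ(x)−φ(y)|_p ≤ K₀|x−y|_p for all x, y ∈ ℚ) and that is quasicompatible with H. Then φ is the restriction of an affine map of ℝ × ℚ_p: there exist α, β ∈ ℚ with α ≠ 0 such that φ(x) = αx + β for all x ∈ ℚ. -/
/-- The diagonal embedding of `ℚ` into `ℝ × ℚ_p`. -/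
noncomputable def diagQ (p : ℕ) [Fact p.Prime] (x : ℚ) : ℝ × ℚ_[p] :=
  ((x : ℝ), (x : ℚ_[p]))

/-- Coordinatewise multiplication by `p^(2n)` on `ℝ × ℚ_p` (the generator of the
group `H`, acting `n` times). -/
noncomputable def scaleH (p : ℕ) [Fact p.Prime] (n : ℤ) (z : ℝ × ℚ_[p]) : ℝ × ℚ_[p] :=
  ((p : ℝ) ^ (2 * n) * z.1, (p : ℚ_[p]) ^ (2 * n) * z.2)

/-- The `H`-invariant diameter `δ(S)`: the infimum over `n ∈ ℤ` of the diameter of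
`p^(2n) · S`, where `ℝ × ℚ_p` carries the sup metric
`d((x₁,y₁),(x₂,y₂)) = max (|x₁−x₂|) (|y₁−y₂|_p)`. -/
noncomputable def deltaH (p : ℕ) [Fact p.Prime] (S : Set (ℝ × ℚ_[p])) : ℝ :=
  ⨅ n : ℤ, Metric.diam (scaleH p n '' S)

/-- A subset `S ⊆ ℚ` has bounded height if `S ⊆ (1/M)·ℤ[1/p]` for some positive
integer `M` coprime to `p`. -/
def BoundedHeight (p : ℕ) (S : Set ℚ) : Prop :=
  ∃ M : ℕ, 0 < M ∧ Nat.Coprime M p ∧ ∀ x ∈ S, (M : ℚ) * x ∈ ZOneOver p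

/-- A map `ψ` with domain `A ⊆ ℚ` is quasi-adapted to `δ` if there is `α : ℕ → ℕ` such
that for every finite `V ⊆ A` (viewed diagonally in `ℝ × ℚ_p`): `δ(V) ≤ k` implies
`δ(ψ(V)) ≤ α(k)` and `δ(ψ(V)) ≤ k` implies `δ(V) ≤ α(k)`. -/
def QuasiAdapted (p : ℕ) [Fact p.Prime] (ψ : ℚ → ℚ) (A : Set ℚ) : Prop :=
  ∃ α : ℕ → ℕ, ∀ V : Finset ℚ, ↑V ⊆ A → ∀ k : ℕ,
    (deltaH p (diagQ p '' ↑V) ≤ (k : ℝ) → deltaH p (diagQ p '' (ψ '' ↑V)) ≤ (α k : ℝ)) ∧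
    (deltaH p (diagQ p '' (ψ '' ↑V)) ≤ (k : ℝ) → deltaH p (diagQ p '' ↑V) ≤ (α k : ℝ))

/-- A bijection `φ : ℚ → ℚ` is quasicompatible with `H` if it is quasi-integral (`φ`
and `φ⁻¹` carry sets of bounded height to sets of bounded height) and the restrictions
of `φ` and `φ⁻¹` to every set of bounded height are quasi-adapted to `δ`. -/
def QuasiCompatible (p : ℕ) [Fact p.Prime] (φ : ℚ → ℚ) : Prop :=
  (∀ A : Set ℚ, BoundedHeight p A → BoundedHeight p (φ '' A)) ∧
  (∀ A : Set ℚ, BoundedHeight p A → BoundedHeight p (φ ⁻¹' A)) ∧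
  (∀ A : Set ℚ, BoundedHeight p A → QuasiAdapted p φ A) ∧
  (∀ A : Set ℚ, BoundedHeight p A → QuasiAdapted p (Function.invFun φ) A)

lemma inv_pow_mem_ZOneOver (p k : ℕ) : ((p : ℚ) ^ k)⁻¹ ∈ ZOneOver p := by
  rw [← inv_pow]
  exact pow_mem (Subring.subset_closure (Set.mem_singleton _)) k

lemma mem_ZOneOver_iff {p : ℕ} (hp : p ≠ 0) {x : ℚ} :
    x ∈ ZOneOver p ↔ ∃ (a : ℤ) (k : ℕ), x = a / (p : ℚ) ^ k := by
  have hp0 : (p : ℚ) ≠ 0 := Nat.cast_ne_zero.2 hp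
  constructor
  · intro hx
    induction hx using Subring.closure_induction with
    | mem x hx =>
        rcases Set.mem_singleton_iff.1 hx with rfl
        exact ⟨1, 1, by simp⟩
    | zero => exact ⟨0, 0, by simp⟩
    | one => exact ⟨1, 0, by simp⟩
    | add x y _ _ ihx ihy =>
        obtain ⟨a, k, rfl⟩ := ihx
        obtain ⟨b, l, rfl⟩ := ihy
        refine ⟨a * p ^ l + b * p ^ k, k + l, ?_⟩
        rw [div_add_div _ _ (pow_ne_zero _ hp0) (pow_ne_zero _ hp0),
          div_eq_div_iff (by positivity) (by positivity)]
        push_cast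
        ring
    | neg x _ ihx =>
        obtain ⟨a, k, rfl⟩ := ihx
        exact ⟨-a, k, by push_cast; ring⟩
    | mul x y _ _ ihx ihy =>
        obtain ⟨a, k, rfl⟩ := ihx
        obtain ⟨b, l, rfl⟩ := ihy
        exact ⟨a * b, k + l, by push_cast; rw [div_mul_div_comm, pow_add]⟩
  · rintro ⟨a, k, rfl⟩
    exact div_eq_mul_inv (a : ℚ) _ ▸ mul_mem (intCast_mem _ a) (inv_pow_mem_ZOneOver p k)

lemma dense_ZOneOver {p : ℕ} (hp : 1 < p) : Dense (ZOneOver p : Set ℚ) := by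
  refine (ZOneOver p).toAddSubgroup.dense_of_not_isolated_zero fun ε hε => ?_
  obtain ⟨k, hk⟩ := exists_pow_lt_of_lt_one hε (inv_lt_one_of_one_lt₀ (Nat.one_lt_cast.2 hp))
  exact ⟨((p : ℚ) ^ k)⁻¹, inv_pow_mem_ZOneOver p k, by positivity, by rwa [← inv_pow]⟩

section ProductFormula

variable {p : ℕ} [Fact p.Prime]

lemma one_le_abs_mul_norm_intCast {a : ℤ} (ha : a ≠ 0) : 1 ≤ |(a : ℝ)| * ‖(a : ℚ_[p])‖ := by
  have hp : 0 < p := (Fact.out : p.Prime).pos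
  have hnorm : ‖(a : ℚ_[p])‖ = ((p : ℝ) ^ padicValNat p a.natAbs)⁻¹ := by
    rw [Padic.norm_eq_zpow_neg_valuation (by exact_mod_cast ha), Padic.valuation_intCast,
      padicValInt, zpow_neg, zpow_natCast]
  have hle : p ^ padicValNat p a.natAbs ≤ a.natAbs :=
    Nat.le_of_dvd (Int.natAbs_pos.2 ha) pow_padicValNat_dvd
  rw [hnorm, ← div_eq_mul_inv, one_le_div (by positivity), ← Int.cast_abs, ← Int.natCast_natAbs]
  exact_mod_cast hle

lemma one_le_abs_mul_norm_of_mem_ZOneOver {x : ℚ} (hx : x ∈ ZOneOver p) (hx0 : x ≠ 0) :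
    1 ≤ |(x : ℝ)| * ‖(x : ℚ_[p])‖ := by
  obtain ⟨a, k, rfl⟩ := (mem_ZOneOver_iff (Fact.out : p.Prime).ne_zero).1 hx
  have ha : a ≠ 0 := by rintro rfl; simp at hx0
  have hp : (0 : ℝ) < p := by exact_mod_cast (Fact.out : p.Prime).pos
  calc (1 : ℝ) ≤ |(a : ℝ)| * ‖(a : ℚ_[p])‖ := one_le_abs_mul_norm_intCast ha
    _ = |((a / (p : ℚ) ^ k : ℚ) : ℝ)| * ‖((a / (p : ℚ) ^ k : ℚ) : ℚ_[p])‖ := by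
      push_cast
      rw [abs_div, norm_div, Padic.norm_p_pow, abs_of_pos (pow_pos hp k), zpow_neg,
        zpow_natCast]
      field_simp

lemma one_le_mul_abs_mul_norm {M : ℕ} (hM : M ≠ 0) {d : ℚ} (hd : d ≠ 0)
    (hmem : (M : ℚ) * d ∈ ZOneOver p) : 1 ≤ M * (|(d : ℝ)| * ‖(d : ℚ_[p])‖) := by
  have hMd : (M : ℚ) * d ≠ 0 := mul_ne_zero (Nat.cast_ne_zero.2 hM) hd
  calc (1 : ℝ) ≤ |((M * d : ℚ) : ℝ)| * ‖((M * d : ℚ) : ℚ_[p])‖ :=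
        one_le_abs_mul_norm_of_mem_ZOneOver hmem hMd
    _ = M * ‖(M : ℚ_[p])‖ * (|(d : ℝ)| * ‖(d : ℚ_[p])‖) := by
      push_cast
      rw [abs_mul, norm_mul, Nat.abs_cast]
      ring
    _ ≤ M * 1 * (|(d : ℝ)| * ‖(d : ℚ_[p])‖) := by
      gcongr
      exact_mod_cast Padic.norm_int_le_one (M : ℤ)
    _ = M * (|(d : ℝ)| * ‖(d : ℚ_[p])‖) := by ring

end ProductFormula

lemma map_zsmul_eq_map_zero_of_periodicOn {G β : Type*} [AddCommGroup G] {A : AddSubgroup G}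
    {f : G → β} {ω : G} (hω : ω ∈ A) (hf : ∀ z ∈ A, f (z + ω) = f z) (n : ℤ) :
    f (n • ω) = f 0 := by
  have hper : Function.Periodic (fun m : ℤ => f (m • ω)) 1 := fun m => by
    simpa only [add_zsmul, one_zsmul] using hf _ (zsmul_mem hω m)
  simpa using hper.int_mul_eq n

lemma map_zsmul_of_map_add {G H : Type*} [AddCommGroup G] [AddCommGroup H] {A : AddSubgroup G}
    {ψ : G → H} (hψ : ∀ x ∈ A, ∀ y ∈ A, ψ (x + y) = ψ x + ψ y) {ω : G} (hω : ω ∈ A) (n : ℤ) :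
    ψ (n • ω) = n • ψ ω :=
  map_zsmul (AddMonoidHom.mk' (fun x : A => ψ x) fun x y => hψ x x.2 y y.2) n ⟨ω, hω⟩

section Rigidity

variable {p : ℕ} [Fact p.Prime] {φ : ℚ → ℚ} {K : ℝ} {M : ℕ}

lemma map_add_add_sub_map_add_eq
    (hR : ∀ x y : ℚ, |(φ x : ℝ) - φ y| ≤ K * |(x : ℝ) - y|)
    (hP : ∀ x y : ℚ, ‖(φ x : ℚ_[p]) - φ y‖ ≤ K * ‖(x : ℚ_[p]) - y‖)
    (hM0 : M ≠ 0) (hM : ∀ x ∈ ZOneOver p, (M : ℚ) * φ x ∈ ZOneOver p)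
    {y s t : ℚ} (hy : y ∈ ZOneOver p) (hs : s ∈ ZOneOver p) (ht : t ∈ ZOneOver p)
    (hst : 4 * K ^ 2 * M * (|(s : ℝ)| * ‖(t : ℚ_[p])‖) < 1) :
    φ (y + s + t) - φ (y + s) = φ (y + t) - φ y := by
  rw [← sub_eq_zero]
  by_contra hd
  set d := φ (y + s + t) - φ (y + s) - (φ (y + t) - φ y)
  have hmem : (M : ℚ) * d ∈ ZOneOver p := by
    have hMd : (M : ℚ) * d = (M * φ (y + s + t) - M * φ (y + s)) - (M * φ (y + t) - M * φ y) := by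
      ring
    rw [hMd]
    exact sub_mem (sub_mem (hM _ (add_mem (add_mem hy hs) ht)) (hM _ (add_mem hy hs)))
      (sub_mem (hM _ (add_mem hy ht)) (hM _ hy))
  have hreal : |(d : ℝ)| ≤ 2 * K * |(s : ℝ)| := by
    have h₁ := hR (y + t + s) (y + t)
    have h₂ := hR (y + s) y
    push_cast at h₁ h₂ ⊢
    rw [add_sub_cancel_left] at h₁ h₂
    rw [add_right_comm] at h₁
    calc _ = |((φ (y + s + t) : ℝ) - φ (y + t)) - ((φ (y + s) : ℝ) - φ y)| := by
          simp only [d]; push_cast; ring_nf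
      _ ≤ _ := abs_sub _ _
      _ ≤ _ := add_le_add h₁ h₂
      _ = _ := by ring
  have hpadic : ‖(d : ℚ_[p])‖ ≤ 2 * K * ‖(t : ℚ_[p])‖ := by
    have h₁ := hP (y + s + t) (y + s)
    have h₂ := hP (y + t) y
    push_cast at h₁ h₂ ⊢
    rw [add_sub_cancel_left] at h₁ h₂
    calc _ ≤ _ := norm_sub_le _ _
      _ ≤ _ := add_le_add h₁ h₂
      _ = _ := by ring
  have hge : 1 ≤ 4 * K ^ 2 * M * (|(s : ℝ)| * ‖(t : ℚ_[p])‖) :=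
    calc (1 : ℝ) ≤ M * (|(d : ℝ)| * ‖(d : ℚ_[p])‖) := one_le_mul_abs_mul_norm hM0 hd hmem
    _ ≤ M * ((2 * K * |(s : ℝ)|) * (2 * K * ‖(t : ℚ_[p])‖)) := by
      gcongr
      exact (abs_nonneg _).trans hreal
    _ = 4 * K ^ 2 * M * (|(s : ℝ)| * ‖(t : ℚ_[p])‖) := by ring
  exact hst.not_ge hge

lemma map_add_sub_map_eq
    (hR : ∀ x y : ℚ, |(φ x : ℝ) - φ y| ≤ K * |(x : ℝ) - y|)
    (hP : ∀ x y : ℚ, ‖(φ x : ℚ_[p]) - φ y‖ ≤ K * ‖(x : ℚ_[p]) - y‖)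
    (hM0 : M ≠ 0) (hM : ∀ x ∈ ZOneOver p, (M : ℚ) * φ x ∈ ZOneOver p)
    {y t : ℚ} (hy : y ∈ ZOneOver p) (ht : t ∈ ZOneOver p) :
    φ (y + t) - φ y = φ t - φ 0 := by
  have hp : 1 < p := (Fact.out : p.Prime).one_lt
  obtain ⟨a, j, rfl⟩ := (mem_ZOneOver_iff (by omega)).1 hy
  obtain ⟨k, hk⟩ : ∃ k : ℕ, 4 * K ^ 2 * M * ‖(t : ℚ_[p])‖ < (p : ℝ) ^ k :=
    pow_unbounded_of_one_lt _ (Nat.one_lt_cast.2 hp)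
  set ω : ℚ := ((p : ℚ) ^ (j + k))⁻¹ with hω_def
  have hω : ω ∈ ZOneOver p := inv_pow_mem_ZOneOver p (j + k)
  have hy_eq : (a : ℚ) / (p : ℚ) ^ j = (a * p ^ k : ℤ) • ω := by
    rw [zsmul_eq_mul, hω_def, pow_add]
    push_cast
    field_simp
  have hsmall : 4 * K ^ 2 * M * (|(ω : ℝ)| * ‖(t : ℚ_[p])‖) < 1 := by
    have hpk : (1 : ℝ) ≤ (p : ℝ) ^ j := one_le_pow₀ (Nat.one_le_cast.2 hp.le)
    have hpos : (0 : ℝ) < (p : ℝ) ^ k := pow_pos (by positivity) k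
    have hω_real : (ω : ℝ) = ((p : ℝ) ^ j * (p : ℝ) ^ k)⁻¹ := by
      rw [hω_def]; push_cast; rw [pow_add]
    rw [hω_real, abs_of_pos (by positivity), ← div_eq_inv_mul, mul_div_assoc',
      div_lt_one (by positivity)]
    nlinarith [norm_nonneg (t : ℚ_[p])]
  rw [hy_eq]
  simpa using map_zsmul_eq_map_zero_of_periodicOn (A := (ZOneOver p).toAddSubgroup)
    (f := fun z => φ (z + t) - φ z) hω
    (fun z hz => map_add_add_sub_map_add_eq hR hP hM0 hM hz hω ht hsmall) (a * p ^ k)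

lemma eqOn_affine_ZOneOver
    (hR : ∀ x y : ℚ, |(φ x : ℝ) - φ y| ≤ K * |(x : ℝ) - y|)
    (hP : ∀ x y : ℚ, ‖(φ x : ℚ_[p]) - φ y‖ ≤ K * ‖(x : ℚ_[p]) - y‖)
    (hM0 : M ≠ 0) (hM : ∀ x ∈ ZOneOver p, (M : ℚ) * φ x ∈ ZOneOver p) :
    Set.EqOn φ (fun x => (φ 1 - φ 0) * x + φ 0) (ZOneOver p) := by
  have hp : p ≠ 0 := (Fact.out : p.Prime).ne_zero
  set ψ : ℚ → ℚ := fun x => φ x - φ 0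
  have hψ : ∀ x ∈ (ZOneOver p).toAddSubgroup, ∀ y ∈ (ZOneOver p).toAddSubgroup,
      ψ (x + y) = ψ x + ψ y := fun x hx y hy => by
    have := map_add_sub_map_eq hR hP hM0 hM hx hy
    simp only [ψ]
    linarith
  intro x hx
  obtain ⟨a, k, rfl⟩ := (mem_ZOneOver_iff hp).1 hx
  have hω := inv_pow_mem_ZOneOver p k
  have hpk : (p : ℚ) ^ k ≠ 0 := pow_ne_zero _ (Nat.cast_ne_zero.2 hp)
  have h₁ : ψ 1 = (p : ℚ) ^ k * ψ ((p : ℚ) ^ k)⁻¹ := by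
    simpa [zsmul_eq_mul, hpk] using map_zsmul_of_map_add hψ hω ((p : ℤ) ^ k)
  have hψx : ψ (a / (p : ℚ) ^ k) = a * ψ ((p : ℚ) ^ k)⁻¹ := by
    simpa [zsmul_eq_mul, div_eq_mul_inv] using map_zsmul_of_map_add hψ hω a
  simp only [ψ] at h₁ hψx
  calc φ (a / (p : ℚ) ^ k) = a * (φ ((p : ℚ) ^ k)⁻¹ - φ 0) + φ 0 := by linarith
    _ = _ := by rw [h₁]; field_simp

end Rigidity

theorem action_rigidity_general (p : ℕ) [Fact p.Prime] (φ : ℚ → ℚ)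
    (hbij : Function.Bijective φ) (K₀ : ℝ)
    (hlipR : ∀ x y : ℚ,
      K₀⁻¹ * |(x : ℝ) - (y : ℝ)| ≤ |(φ x : ℝ) - (φ y : ℝ)| ∧
      |(φ x : ℝ) - (φ y : ℝ)| ≤ K₀ * |(x : ℝ) - (y : ℝ)|)
    (hlipP : ∀ x y : ℚ,
      K₀⁻¹ * ‖(x : ℚ_[p]) - (y : ℚ_[p])‖ ≤ ‖(φ x : ℚ_[p]) - (φ y : ℚ_[p])‖ ∧
      ‖(φ x : ℚ_[p]) - (φ y : ℚ_[p])‖ ≤ K₀ * ‖(x : ℚ_[p]) - (y : ℚ_[p])‖)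
    (hqc : QuasiCompatible p φ) :
    ∃ α β : ℚ, α ≠ 0 ∧ ∀ x : ℚ, φ x = α * x + β := by
  obtain ⟨M, hM0, -, hM⟩ :=
    hqc.1 (ZOneOver p) ⟨1, one_pos, Nat.coprime_one_left p, fun x hx => by simpa using hx⟩
  have hEqOn : Set.EqOn φ (fun x => (φ 1 - φ 0) * x + φ 0) (ZOneOver p) :=
    eqOn_affine_ZOneOver (fun x y => (hlipR x y).2) (fun x y => (hlipP x y).2) hM0.ne'
      fun x hx => hM _ ⟨x, hx, rfl⟩
  have hφ : Continuous φ := (LipschitzWith.of_dist_le' fun x y => by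
    simpa only [Rat.dist_eq] using (hlipR x y).2).continuous
  have hdense := dense_ZOneOver (Fact.out : p.Prime).one_lt
  refine ⟨φ 1 - φ 0, φ 0, sub_ne_zero.2 (hbij.injective.ne one_ne_zero), fun x => ?_⟩
  exact congrFun (hφ.ext_on hdense (by fun_prop) hEqOn) x

/-- **Action Rigidity.** A bijection `φ : ℚ → ℚ` which is `K₀`-bilipschitz
for both the real and the `p`-adic absolute values and quasicompatible with `H` is the
restriction of an affine map of `ℝ × ℚ_p`: `φ(x) = αx + β` with `α ≠ 0`. -/
theorem action_rigidity (p : ℕ) [Fact p.Prime] (φ : ℚ → ℚ)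
    (hbij : Function.Bijective φ) (K₀ : ℝ) (hK₀ : 1 ≤ K₀)
    (hlipR : ∀ x y : ℚ,
      K₀⁻¹ * |(x : ℝ) - (y : ℝ)| ≤ |(φ x : ℝ) - (φ y : ℝ)| ∧
      |(φ x : ℝ) - (φ y : ℝ)| ≤ K₀ * |(x : ℝ) - (y : ℝ)|)
    (hlipP : ∀ x y : ℚ,
      K₀⁻¹ * ‖(x : ℚ_[p]) - (y : ℚ_[p])‖ ≤ ‖(φ x : ℚ_[p]) - (φ y : ℚ_[p])‖ ∧
      ‖(φ x : ℚ_[p]) - (φ y : ℚ_[p])‖ ≤ K₀ * ‖(x : ℚ_[p]) - (y : ℚ_[p])‖)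
    (hqc : QuasiCompatible p φ) :
    ∃ α β : ℚ, α ≠ 0 ∧ ∀ x : ℚ, φ x = α * x + β :=
  action_rigidity_general p φ hbij K₀ hlipR hlipP hqc
end

section
/- Let p be a prime and B a positive integer. There exists s₀ ∈ ℕ with the following property: for all integers x, y, z, w with 1 ≤ |x|, |y|, |z|, |w| ≤ B, none of which is divisible by p, and all integers n, m, N, M such that in ℚ one has pⁿ·x + p^N·z = p^m·y + p^M·w with this common value nonzero, if n − m > s₀ then p^N·z = p^m·y and p^M·w = pⁿ·x (equivalently, N = m, z = y, M = n and w = x). -/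
/-!
Dividing by the smallest power of `p` involved turns the hypothesis into an identity between
integers `p^a x + p^c z = p^b y + p^d w` with `a > b + 2r`, where `3B < p^r`.  A sum
`p^i u + p^j v ≠ 0` with small `p`-coprime coefficients is not divisible by `p^(min i j + r + 1)`:
if `i ≠ j` its valuation is exactly `min i j`, and if `i = j` the cofactor `u + v` is too small.
As the left side is divisible by `p^(min a c)`, this forces first `c < a` and then `c ≤ b + r`;
applied to the difference `T = p^a x - p^d w = p^b y - p^c z` (if `T ≠ 0`) it forces
`d ≤ b + r`.  But then `p^a ≤ |p^b y - p^c z + p^d w| ≤ 3B p^(b+r) < p^a`, so `T = 0`.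
-/

lemma abs_pow_mul_le {R : Type*} [Ring R] [LinearOrder R] [IsStrictOrderedRing R]
    {p u B : R} {i k : ℕ} (hp : 1 ≤ p) (hik : i ≤ k) (hu : |u| ≤ B) :
    |p ^ i * u| ≤ p ^ k * B := by
  rw [abs_mul, abs_pow, abs_of_nonneg (zero_le_one.trans hp)]
  exact mul_le_mul (pow_le_pow_right₀ hp hik) hu (abs_nonneg u)
    (pow_nonneg (zero_le_one.trans hp) k)

lemma abs_pow_mul_add_pow_mul_add_pow_mul_le {R : Type*} [CommRing R] [LinearOrder R]
    [IsStrictOrderedRing R] {p u v w B : R} {i j l k : ℕ} (hp : 1 ≤ p) (hik : i ≤ k)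
    (hjk : j ≤ k) (hlk : l ≤ k) (hu : |u| ≤ B) (hv : |v| ≤ B) (hw : |w| ≤ B) :
    |p ^ i * u + p ^ j * v + p ^ l * w| ≤ 3 * B * p ^ k := by
  have := abs_add_three (p ^ i * u) (p ^ j * v) (p ^ l * w)
  linarith [abs_pow_mul_le hp hik hu, abs_pow_mul_le hp hjk hv, abs_pow_mul_le hp hlk hw]

section Valuation

variable {p : ℕ} {u v B : ℤ} {r i j e : ℕ}

lemma le_add_of_pow_dvd_pow_mul_add_pow_mul_of_le (hp : p.Prime) (hu : ¬ (p : ℤ) ∣ u)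
    (huB : |u| ≤ B) (hvB : |v| ≤ B) (hr : 2 * B < (p : ℤ) ^ r) (hij : i ≤ j)
    (hS : (p : ℤ) ^ i * u + (p : ℤ) ^ j * v ≠ 0)
    (hdvd : (p : ℤ) ^ e ∣ (p : ℤ) ^ i * u + (p : ℤ) ^ j * v) : e ≤ i + r := by
  obtain ⟨t, rfl⟩ := Nat.exists_eq_add_of_le hij
  have hfactor :
      (p : ℤ) ^ i * u + (p : ℤ) ^ (i + t) * v = (p : ℤ) ^ i * (u + (p : ℤ) ^ t * v) := by
    ring
  rw [hfactor] at hS hdvd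
  have hq : u + (p : ℤ) ^ t * v ≠ 0 := right_ne_zero_of_mul hS
  by_contra! he
  have hdvd_q : (p : ℤ) ^ (r + 1) ∣ u + (p : ℤ) ^ t * v := by
    have h := (pow_dvd_pow (p : ℤ) (show i + (r + 1) ≤ e by omega)).trans hdvd
    rwa [pow_add, mul_dvd_mul_iff_left (pow_ne_zero _ (by exact_mod_cast hp.ne_zero))] at h
  rcases t with _ | t
  · have hle := Int.le_of_dvd (abs_pos.mpr hq) ((dvd_abs _ _).mpr hdvd_q)
    have hmono : (p : ℤ) ^ r ≤ (p : ℤ) ^ (r + 1) :=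
      pow_le_pow_right₀ (by exact_mod_cast hp.one_lt.le) r.le_succ
    have := abs_add_le u v
    simp only [pow_zero, one_mul] at hle this
    linarith
  · have hp_q := (dvd_pow_self (p : ℤ) r.succ_ne_zero).trans hdvd_q
    exact hu (by simpa using dvd_sub hp_q ((dvd_pow_self (p : ℤ) t.succ_ne_zero).mul_right v))

lemma le_min_add_of_pow_dvd_pow_mul_add_pow_mul (hp : p.Prime) (hu : ¬ (p : ℤ) ∣ u)
    (hv : ¬ (p : ℤ) ∣ v) (huB : |u| ≤ B) (hvB : |v| ≤ B) (hr : 2 * B < (p : ℤ) ^ r)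
    (hS : (p : ℤ) ^ i * u + (p : ℤ) ^ j * v ≠ 0)
    (hdvd : (p : ℤ) ^ e ∣ (p : ℤ) ^ i * u + (p : ℤ) ^ j * v) : e ≤ min i j + r := by
  rcases le_total i j with hij | hji
  · rw [min_eq_left hij]
    exact le_add_of_pow_dvd_pow_mul_add_pow_mul_of_le hp hu huB hvB hr hij hS hdvd
  · rw [min_eq_right hji]
    rw [add_comm] at hS hdvd
    exact le_add_of_pow_dvd_pow_mul_add_pow_mul_of_le hp hv hvB huB hr hji hS hdvd

end Valuation

theorem pow_mul_add_pow_mul_eq_termwise {p : ℕ} (hp : p.Prime) {B : ℤ} {r : ℕ}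
    (hr : 3 * B < (p : ℤ) ^ r) {x y z w : ℤ}
    (hx : 1 ≤ |x|) (hy : ¬ (p : ℤ) ∣ y) (hz : ¬ (p : ℤ) ∣ z) (hw : ¬ (p : ℤ) ∣ w)
    (hyB : |y| ≤ B) (hzB : |z| ≤ B) (hwB : |w| ≤ B) {a b c d : ℕ}
    (heq : (p : ℤ) ^ a * x + (p : ℤ) ^ c * z = (p : ℤ) ^ b * y + (p : ℤ) ^ d * w)
    (hne : (p : ℤ) ^ a * x + (p : ℤ) ^ c * z ≠ 0) (hab : b + 2 * r < a) :
    (p : ℤ) ^ c * z = (p : ℤ) ^ b * y ∧ (p : ℤ) ^ d * w = (p : ℤ) ^ a * x := by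
  have hp1 : (1 : ℤ) ≤ p := by exact_mod_cast hp.one_lt.le
  have h2B : 2 * B < (p : ℤ) ^ r := by linarith [(abs_nonneg y).trans hyB]
  have hval_rhs {e : ℕ} (h : (p : ℤ) ^ e ∣ (p : ℤ) ^ b * y + (p : ℤ) ^ d * w) : e ≤ b + r :=
    (le_min_add_of_pow_dvd_pow_mul_add_pow_mul hp hy hw hyB hwB h2B (heq ▸ hne) h).trans
      (by omega)
  have hca : c < a := by
    by_contra! hac
    have := hval_rhs (heq ▸ dvd_add (dvd_mul_right _ x) ((pow_dvd_pow _ hac).mul_right z))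
    omega
  have hcb : c ≤ b + r :=
    hval_rhs (heq ▸ dvd_add ((pow_dvd_pow _ hca.le).mul_right x) (dvd_mul_right _ z))
  suffices hT : (p : ℤ) ^ a * x - (p : ℤ) ^ d * w = 0 by constructor <;> linarith
  by_contra hT
  have hT' : (p : ℤ) ^ a * x + (p : ℤ) ^ d * (-w) = (p : ℤ) ^ b * y + (p : ℤ) ^ c * (-z) := by
    linear_combination heq
  have hd : d ≤ b + r := by
    have := le_min_add_of_pow_dvd_pow_mul_add_pow_mul hp hy (by rwa [dvd_neg]) hyB
      (by rwa [abs_neg]) h2B (by rw [← hT']; contrapose! hT; linear_combination hT) (e := min a d)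
      (hT' ▸ dvd_add ((pow_dvd_pow _ (min_le_left a d)).mul_right x)
        ((pow_dvd_pow _ (min_le_right a d)).mul_right (-w)))
    omega
  have hlower : (p : ℤ) ^ a ≤ |(p : ℤ) ^ a * x| := by
    rw [abs_mul, abs_pow, abs_of_nonneg (by omega)]
    exact le_mul_of_one_le_right (by positivity) hx
  have hupper : |(p : ℤ) ^ a * x| ≤ 3 * B * (p : ℤ) ^ (b + r) := by
    rw [show (p : ℤ) ^ a * x = (p : ℤ) ^ b * y + (p : ℤ) ^ c * (-z) + (p : ℤ) ^ d * w by
      linear_combination heq]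
    exact abs_pow_mul_add_pow_mul_add_pow_mul_le hp1 (Nat.le_add_right b r) hcb hd hyB
      (by rwa [abs_neg]) hwB
  have hgap : 3 * B * (p : ℤ) ^ (b + r) < (p : ℤ) ^ a :=
    calc 3 * B * (p : ℤ) ^ (b + r) < (p : ℤ) ^ r * (p : ℤ) ^ (b + r) :=
          mul_lt_mul_of_pos_right hr (by positivity)
      _ = (p : ℤ) ^ (b + 2 * r) := by ring
      _ ≤ (p : ℤ) ^ a := pow_le_pow_right₀ hp1 hab.le
  linarith

lemma Int.exists_eq_add_natCast_of_four (n m N M : ℤ) :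
    ∃ k : ℤ, ∃ a b c d : ℕ, n = k + a ∧ m = k + b ∧ N = k + c ∧ M = k + d := by
  set k := min (min n m) (min N M)
  exact ⟨k, (n - k).toNat, (m - k).toNat, (N - k).toNat, (M - k).toNat,
    by omega, by omega, by omega, by omega⟩

lemma zpow_add_natCast_mul {K : Type*} [GroupWithZero K] {q : K} (hq : q ≠ 0) (k : ℤ) (a : ℕ)
    (u : K) : q ^ (k + a) * u = q ^ k * (q ^ a * u) := by
  rw [zpow_add₀ hq, zpow_natCast, mul_assoc]

theorem parallelogram_arithmetic_core_general (p : ℕ) (hp : p.Prime) (B : ℕ) :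
    ∃ s₀ : ℕ, ∀ x y z w : ℤ,
      1 ≤ |x| → |x| ≤ (B : ℤ) → 1 ≤ |y| → |y| ≤ (B : ℤ) →
      1 ≤ |z| → |z| ≤ (B : ℤ) → 1 ≤ |w| → |w| ≤ (B : ℤ) →
      ¬ (p : ℤ) ∣ x → ¬ (p : ℤ) ∣ y → ¬ (p : ℤ) ∣ z → ¬ (p : ℤ) ∣ w →
      ∀ n m N M : ℤ,
        (p : ℚ) ^ n * (x : ℚ) + (p : ℚ) ^ N * (z : ℚ)
          = (p : ℚ) ^ m * (y : ℚ) + (p : ℚ) ^ M * (w : ℚ) →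
        (p : ℚ) ^ n * (x : ℚ) + (p : ℚ) ^ N * (z : ℚ) ≠ 0 →
        (s₀ : ℤ) < n - m →
        (p : ℚ) ^ N * (z : ℚ) = (p : ℚ) ^ m * (y : ℚ) ∧
          (p : ℚ) ^ M * (w : ℚ) = (p : ℚ) ^ n * (x : ℚ) := by
  obtain ⟨r, hr⟩ : ∃ r : ℕ, 3 * (B : ℤ) < (p : ℤ) ^ r :=
    ⟨3 * B, by exact_mod_cast Nat.lt_pow_self hp.one_lt⟩
  refine ⟨2 * r, fun x y z w hx _ _ hyB _ hzB _ hwB _ hy hz hw n m N M heq hne hnm => ?_⟩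
  obtain ⟨k, a, b, c, d, rfl, rfl, rfl, rfl⟩ := Int.exists_eq_add_natCast_of_four n m N M
  have hp0 : (p : ℚ) ≠ 0 := by exact_mod_cast hp.ne_zero
  have hpk : (p : ℚ) ^ k ≠ 0 := zpow_ne_zero k hp0
  simp only [zpow_add_natCast_mul hp0, mul_right_inj' hpk] at heq hne ⊢
  rw [← mul_add, ← mul_add, mul_right_inj' hpk] at heq
  rw [← mul_add, mul_ne_zero_iff] at hne
  exact_mod_cast pow_mul_add_pow_mul_eq_termwise hp hr hx hy hz hw hyB hzB hwB
    (by exact_mod_cast heq) (by exact_mod_cast hne.2) (by omega)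

/-- **arithmetic core of the Parallelogram Lemma.** For a prime `p` and a
bound `B`, there is `s₀` such that whenever `x, y, z, w` are nonzero integers of absolute
value at most `B`, none divisible by `p`, and `pⁿ·x + p^N·z = p^m·y + p^M·w` in `ℚ` with
nonzero common value and `n − m > s₀`, the identity holds term by term:
`p^N·z = p^m·y` and `p^M·w = pⁿ·x`. -/
theorem parallelogram_arithmetic_core (p : ℕ) (hp : p.Prime) (B : ℕ) (hB : 0 < B) :
    ∃ s₀ : ℕ, ∀ x y z w : ℤ,
      1 ≤ |x| → |x| ≤ (B : ℤ) → 1 ≤ |y| → |y| ≤ (B : ℤ) →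
      1 ≤ |z| → |z| ≤ (B : ℤ) → 1 ≤ |w| → |w| ≤ (B : ℤ) →
      ¬ (p : ℤ) ∣ x → ¬ (p : ℤ) ∣ y → ¬ (p : ℤ) ∣ z → ¬ (p : ℤ) ∣ w →
      ∀ n m N M : ℤ,
        (p : ℚ) ^ n * (x : ℚ) + (p : ℚ) ^ N * (z : ℚ)
          = (p : ℚ) ^ m * (y : ℚ) + (p : ℚ) ^ M * (w : ℚ) →
        (p : ℚ) ^ n * (x : ℚ) + (p : ℚ) ^ N * (z : ℚ) ≠ 0 →
        (s₀ : ℤ) < n - m →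
        (p : ℚ) ^ N * (z : ℚ) = (p : ℚ) ^ m * (y : ℚ) ∧
          (p : ℚ) ^ M * (w : ℚ) = (p : ℚ) ^ n * (x : ℚ) :=
  parallelogram_arithmetic_core_general p hp B
end

section
/- Let p be a prime, k a positive integer coprime to p, and D > 0. Let S = { x ∈ (1/k)·ℤ[1/p] : x ≠ 0 and δ({0, x}) ≤ D }, where each rational x is viewed as the diagonal point (x,x) ∈ ℝ × ℚ_p. Then S is a union of finitely many orbits of multiplication by p²: there is a finite set F ⊂ ℚ such that S = { p^{2n}·a : n ∈ ℤ, a ∈ F }. -/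
/-! The quantity `δ({0, x}) = ⨅ n, max (p^(2n) |x|) (p^(-2n) |x|_p)` is unchanged by `x ↦ p² x`,
and it is at least `√(|x| |x|_p)` because scaling by `p^(2n)` preserves the product of the two
coordinates' norms. Every orbit meets the shell `p⁻¹ ≤ |a|_p ≤ 1`; there `k a` is an element of
`ℤ[1/p]` of norm at most `1`, hence an integer, and `|a| ≤ p D²`, which leaves finitely many `a`. -/

lemma exists_den_dvd_pow_of_mem_ZOneOver (p : ℕ) {q : ℚ} (hq : q ∈ ZOneOver p) :
    ∃ m : ℕ, q.den ∣ p ^ m := by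
  induction hq using Subring.closure_induction with
  | mem x hx =>
    rw [Set.mem_singleton_iff.mp hx]
    exact ⟨1, by rw [Rat.inv_natCast_den, pow_one]; split_ifs <;> simp⟩
  | zero => exact ⟨0, by simp⟩
  | one => exact ⟨0, by simp⟩
  | add x y _ _ hx hy =>
    obtain ⟨m, hm⟩ := hx
    obtain ⟨l, hl⟩ := hy
    exact ⟨m + l, (Rat.add_den_dvd x y).trans (pow_add p m l ▸ mul_dvd_mul hm hl)⟩
  | neg x _ hx => simpa using hx
  | mul x y _ _ hx hy =>
    obtain ⟨m, hm⟩ := hx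
    obtain ⟨l, hl⟩ := hy
    exact ⟨m + l, (Rat.mul_den_dvd x y).trans (pow_add p m l ▸ mul_dvd_mul hm hl)⟩

lemma zpow_mem_ZOneOver (p : ℕ) (n : ℤ) : (p : ℚ) ^ n ∈ ZOneOver p := by
  obtain ⟨m, rfl | rfl⟩ := n.eq_nat_or_neg
  · rw [zpow_natCast]
    exact pow_mem (natCast_mem _ p) m
  · rw [zpow_neg, zpow_natCast, ← inv_pow]
    exact pow_mem (Subring.subset_closure (Set.mem_singleton _)) m

section

variable {p : ℕ} [Fact p.Prime]

lemma den_eq_one_of_mem_ZOneOver {q : ℚ} (hq : q ∈ ZOneOver p) (hnorm : ‖(q : ℚ_[p])‖ ≤ 1) :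
    q.den = 1 := by
  obtain ⟨m, hm⟩ := exists_den_dvd_pow_of_mem_ZOneOver p hq
  have hp_not_dvd : ¬p ∣ q.den := Rat.padicValuation_le_one_iff.mp
    ((Padic.norm_rat_le_one_iff_padicValuation_le_one p).mp hnorm)
  exact Nat.Coprime.eq_one_of_dvd
    (((Nat.Prime.coprime_iff_not_dvd Fact.out).mpr hp_not_dvd).symm.pow_right m) hm

lemma exists_norm_zpow_mul_mem_Icc {x : ℚ} (hx : x ≠ 0) :
    ∃ n : ℤ, ‖(((p : ℚ) ^ (2 * n) * x : ℚ) : ℚ_[p])‖ ∈ Set.Icc (p : ℝ)⁻¹ 1 := by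
  obtain ⟨v, hv⟩ : ∃ v, (x : ℚ_[p]).valuation = v := ⟨_, rfl⟩
  refine ⟨-(v / 2), ?_⟩
  have hp : (1 : ℝ) ≤ p := mod_cast (Fact.out : p.Prime).one_le
  have hnorm : ‖(((p : ℚ) ^ (2 * -(v / 2)) * x : ℚ) : ℚ_[p])‖ = (p : ℝ) ^ (-(v % 2)) := by
    rw [Rat.cast_mul, Rat.cast_zpow, Rat.cast_natCast, norm_mul, norm_zpow, Padic.norm_p,
      Padic.norm_eq_zpow_neg_valuation (by exact_mod_cast hx), hv, inv_zpow',
      ← zpow_add₀ (by positivity)]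
    congr 1
    omega
  rw [hnorm, Set.mem_Icc, ← zpow_neg_one]
  constructor
  · exact zpow_le_zpow_right₀ hp (by omega)
  · exact zpow_le_one_of_nonpos₀ hp (by omega)

end

lemma norm_fst_mul_norm_snd_le_norm_sq {E F : Type*} [SeminormedAddCommGroup E]
    [SeminormedAddCommGroup F] (z : E × F) : ‖z.1‖ * ‖z.2‖ ≤ ‖z‖ ^ 2 := by
  rw [sq]
  exact mul_le_mul (norm_fst_le z) (norm_snd_le z) (norm_nonneg _) (norm_nonneg _)

section

variable {p : ℕ} [Fact p.Prime]

lemma scaleH_scaleH (m n : ℤ) (z : ℝ × ℚ_[p]) :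
    scaleH p m (scaleH p n z) = scaleH p (m + n) z := by
  simp only [scaleH, ← mul_assoc, ← zpow_add₀ (NeZero.ne (p : ℝ)),
    ← zpow_add₀ (NeZero.ne (p : ℚ_[p])), mul_add]

lemma scaleH_zero (n : ℤ) : scaleH p n 0 = 0 := by
  simp [scaleH]

lemma diagQ_zpow_mul (n : ℤ) (x : ℚ) :
    diagQ p ((p : ℚ) ^ (2 * n) * x) = scaleH p n (diagQ p x) := by
  simp [diagQ, scaleH]

lemma norm_fst_mul_norm_snd_scaleH (n : ℤ) (z : ℝ × ℚ_[p]) :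
    ‖(scaleH p n z).1‖ * ‖(scaleH p n z).2‖ = ‖z.1‖ * ‖z.2‖ := by
  have hp : (p : ℝ) ≠ 0 := NeZero.ne _
  simp only [scaleH, norm_mul, norm_zpow, Padic.norm_p, Real.norm_natCast, inv_zpow]
  field_simp

lemma deltaH_image_scaleH (m : ℤ) (S : Set (ℝ × ℚ_[p])) :
    deltaH p (scaleH p m '' S) = deltaH p S := by
  simp only [deltaH, Set.image_image, scaleH_scaleH]
  exact (Equiv.addRight m).surjective.iInf_comp fun n ↦ Metric.diam (scaleH p n '' S)

lemma deltaH_pair_zero_zpow_mul (n : ℤ) (x : ℚ) :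
    deltaH p (diagQ p '' {0, (p : ℚ) ^ (2 * n) * x}) = deltaH p (diagQ p '' {0, x}) := by
  have hpair : diagQ p '' {0, (p : ℚ) ^ (2 * n) * x} = scaleH p n '' (diagQ p '' {0, x}) := by
    simp only [Set.image_pair, ← diagQ_zpow_mul, mul_zero]
  rw [hpair, deltaH_image_scaleH]

lemma sqrt_norm_mul_norm_le_deltaH_pair_zero (x : ℚ) :
    √(‖(x : ℝ)‖ * ‖(x : ℚ_[p])‖) ≤ deltaH p (diagQ p '' {0, x}) := by
  refine le_ciInf fun n ↦ ?_
  have hdiam : Metric.diam (scaleH p n '' (diagQ p '' {0, x})) = ‖scaleH p n (diagQ p x)‖ := by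
    rw [Set.image_pair, Set.image_pair, show diagQ p 0 = 0 by simp [diagQ], scaleH_zero,
      Metric.diam_pair, dist_zero_left]
  rw [hdiam, Real.sqrt_le_left (norm_nonneg _)]
  have := norm_fst_mul_norm_snd_le_norm_sq (scaleH p n (diagQ p x))
  rwa [norm_fst_mul_norm_snd_scaleH] at this

lemma norm_mul_norm_le_sq_of_deltaH_pair_zero_le {x : ℚ} {D : ℝ}
    (h : deltaH p (diagQ p '' {0, x}) ≤ D) : ‖(x : ℝ)‖ * ‖(x : ℚ_[p])‖ ≤ D ^ 2 :=
  (Real.sqrt_le_iff.mp ((sqrt_norm_mul_norm_le_deltaH_pair_zero x).trans h)).2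

end

lemma finite_setOf_den_natCast_mul_eq_one_of_norm_le {k : ℕ} (hk : k ≠ 0) (C : ℝ) :
    {a : ℚ | ((k : ℚ) * a).den = 1 ∧ ‖(a : ℝ)‖ ≤ C}.Finite := by
  refine ((Set.finite_Icc (-⌈k * C⌉) ⌈k * C⌉).image fun c : ℤ ↦ (c : ℚ) / k).subset ?_
  rintro a ⟨hden, hC⟩
  have hnum : (((k : ℚ) * a).num : ℚ) = k * a := (Rat.den_eq_one_iff _).mp hden
  refine ⟨((k : ℚ) * a).num, ?_, by simp only [hnum]; field_simp⟩
  have hbound : |(((k : ℚ) * a).num : ℝ)| ≤ k * C := by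
    rw [← Rat.cast_intCast, hnum, Rat.cast_mul, Rat.cast_natCast, abs_mul, Nat.abs_cast,
      ← Real.norm_eq_abs]
    gcongr
  rw [Set.mem_Icc, ← abs_le]
  exact_mod_cast hbound.trans (Int.le_ceil _)

def boundedDeltaSet (p : ℕ) [Fact p.Prime] (k : ℕ) (D : ℝ) : Set ℚ :=
  {x | (k : ℚ) * x ∈ ZOneOver p ∧ x ≠ 0 ∧ deltaH p (diagQ p '' {0, x}) ≤ D}

section

variable {p : ℕ} [Fact p.Prime]

lemma zpow_mul_mem_boundedDeltaSet {k : ℕ} {D : ℝ} {x : ℚ} (hx : x ∈ boundedDeltaSet p k D)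
    (n : ℤ) : (p : ℚ) ^ (2 * n) * x ∈ boundedDeltaSet p k D := by
  obtain ⟨hkx, hx0, hδ⟩ := hx
  refine ⟨?_, mul_ne_zero (zpow_ne_zero _ (NeZero.ne _)) hx0,
    (deltaH_pair_zero_zpow_mul n x).trans_le hδ⟩
  rw [mul_left_comm]
  exact mul_mem (zpow_mem_ZOneOver p _) hkx

lemma finite_boundedDeltaSet_inter_norm_mem_Icc {k : ℕ} (hkp : k.Coprime p) (D : ℝ) :
    (boundedDeltaSet p k D ∩ {a | ‖(a : ℚ_[p])‖ ∈ Set.Icc (p : ℝ)⁻¹ 1}).Finite := by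
  have hk : k ≠ 0 := by
    rintro rfl
    exact (Fact.out : p.Prime).one_lt.ne' ((Nat.coprime_zero_left p).mp hkp)
  have hk_norm : ‖((k : ℚ) : ℚ_[p])‖ = 1 := by
    exact_mod_cast Padic.norm_natCast_eq_one_iff.mpr hkp.symm
  refine (finite_setOf_den_natCast_mul_eq_one_of_norm_le hk (p * D ^ 2)).subset ?_
  rintro a ⟨⟨hka, -, hδ⟩, hlow, hup⟩
  refine ⟨den_eq_one_of_mem_ZOneOver hka (by rwa [Rat.cast_mul, norm_mul, hk_norm, one_mul]), ?_⟩
  have hp : (0 : ℝ) < p := mod_cast (Fact.out : p.Prime).pos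
  calc ‖(a : ℝ)‖ = p * (‖(a : ℝ)‖ * (p : ℝ)⁻¹) := by field_simp
    _ ≤ p * (‖(a : ℝ)‖ * ‖(a : ℚ_[p])‖) := by gcongr
    _ ≤ p * D ^ 2 := by gcongr; exact norm_mul_norm_le_sq_of_deltaH_pair_zero_le hδ

end

theorem bounded_delta_set_is_finite_union_of_orbits_general
    (p : ℕ) [Fact p.Prime] (k : ℕ) (hkp : Nat.Coprime k p)
    (D : ℝ) :
    ∃ F : Finset ℚ,
      {x : ℚ | (k : ℚ) * x ∈ ZOneOver p ∧ x ≠ 0 ∧ deltaH p (diagQ p '' {0, x}) ≤ D}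
        = {x : ℚ | ∃ (n : ℤ) (a : ℚ), a ∈ F ∧ x = (p : ℚ) ^ (2 * n) * a} := by
  have hfin := finite_boundedDeltaSet_inter_norm_mem_Icc hkp D
  refine ⟨hfin.toFinset, Set.ext fun x ↦ ⟨fun hx ↦ ?_, ?_⟩⟩
  · obtain ⟨n, hn⟩ := exists_norm_zpow_mul_mem_Icc (p := p) hx.2.1
    refine ⟨-n, _, hfin.mem_toFinset.mpr ⟨zpow_mul_mem_boundedDeltaSet hx n, hn⟩, ?_⟩
    rw [← mul_assoc, ← zpow_add₀ (NeZero.ne _)]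
    simp
  · rintro ⟨n, a, ha, rfl⟩
    exact zpow_mul_mem_boundedDeltaSet (hfin.mem_toFinset.mp ha).1 n

/-- For `k` coprime to `p` and `D > 0`, the set
`S = { x ∈ (1/k)·ℤ[1/p] : x ≠ 0, δ({0,x}) ≤ D }` is a union of finitely many orbits
of multiplication by `p²`. -/
theorem bounded_delta_set_is_finite_union_of_orbits
    (p : ℕ) [Fact p.Prime] (k : ℕ) (hk : 0 < k) (hkp : Nat.Coprime k p)
    (D : ℝ) (hD : 0 < D) :
    ∃ F : Finset ℚ,
      {x : ℚ | (k : ℚ) * x ∈ ZOneOver p ∧ x ≠ 0 ∧ deltaH p (diagQ p '' {0, x}) ≤ D}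
        = {x : ℚ | ∃ (n : ℤ) (a : ℚ), a ∈ F ∧ x = (p : ℚ) ^ (2 * n) * a} :=
  bounded_delta_set_is_finite_union_of_orbits_general p k hkp D
end

section
/- In the hyperbolic upper half-plane ℍ = {z ∈ ℂ : Im z > 0} with the metric of constant curvature −1 (from ds² = (dx² + dy²)/y²), let 0 < b ≤ a, let L_a = {z ∈ ℍ : Im z = a} be the horocycle based at ∞ at Euclidean height a, and let C_b = {z ∈ ℍ : |z − i·b/2| = b/2} be the horocycle based at 0 of Euclidean diameter b. Then the infimum of hyperbolic distances between points of L_a and points of C_b equals log(a/b). -/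
/-!
A point `w` of the horocycle `C_b` has `Im w ≤ b`, and the hyperbolic distance dominates the
distance of the logarithms of the imaginary parts, so `dist z w ≥ log (a / Im w) ≥ log (a / b)`
for `Im z = a`. The bound is attained by the points `i a` and `i b` of the imaginary axis, a
geodesic along which the distance is exactly `log (a / b)`.
-/

open UpperHalfPlane

lemma Complex.im_le_im_add_of_norm_sub_le {w c : ℂ} {r : ℝ} (h : ‖w - c‖ ≤ r) :
    w.im ≤ c.im + r := by
  have h_im : |w.im - c.im| ≤ r := by
    simpa only [Complex.sub_im] using (Complex.abs_im_le_norm (w - c)).trans h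
  linarith [le_abs_self (w.im - c.im)]

namespace UpperHalfPlane

lemma log_div_im_le_dist (z w : ℍ) : Real.log (z.im / w.im) ≤ dist z w := by
  rw [Real.log_div z.im_pos.ne' w.im_pos.ne']
  exact (le_abs_self _).trans (dist_log_im_le z w)

lemma log_div_le_dist_of_im_le {z w : ℍ} {b : ℝ} (hb : 0 < b) (hw : w.im ≤ b) :
    Real.log (z.im / b) ≤ dist z w :=
  calc Real.log (z.im / b) ≤ Real.log (z.im / w.im) :=
        Real.log_le_log (div_pos z.im_pos hb) (div_le_div_of_nonneg_left z.im_pos.le w.im_pos hw)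
    _ ≤ dist z w := log_div_im_le_dist z w

lemma dist_eq_log_div_of_re_eq {z w : ℍ} (h : z.re = w.re) (hle : w.im ≤ z.im) :
    dist z w = Real.log (z.im / w.im) := by
  rw [dist_of_re_eq h, Real.dist_eq, ← Real.log_div z.im_pos.ne' w.im_pos.ne']
  exact abs_of_nonneg (Real.log_nonneg ((one_le_div w.im_pos).2 hle))

end UpperHalfPlane

/-- In the hyperbolic upper half-plane, for `0 < b ≤ a`, the infimum of
hyperbolic distances between points of the horocycle `L_a = {Im z = a}` (based at `∞`)
and points of the horocycle `C_b = {|z − i·b/2| = b/2}` (based at `0`, of Euclidean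
diameter `b`) equals `log (a / b)`. -/
theorem horocycle_inf_dist (a b : ℝ) (hb : 0 < b) (hab : b ≤ a) :
    sInf {r : ℝ | ∃ z w : UpperHalfPlane, z.im = a ∧
        ‖(w : ℂ) - Complex.I * (b / 2)‖ = b / 2 ∧ r = dist z w}
      = Real.log (a / b) := by
  let z₀ : ℍ := ⟨Complex.I * a, by simpa using hb.trans_le hab⟩
  let w₀ : ℍ := ⟨Complex.I * b, by simpa using hb⟩
  refine IsLeast.csInf_eq ⟨⟨z₀, w₀, by simp [z₀], ?_, ?_⟩, ?_⟩
  · have hw₀ : (w₀ : ℂ) - Complex.I * (b / 2) = Complex.I * (b / 2 : ℝ) := by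
      push_cast [w₀]; ring
    rw [hw₀, norm_mul, Complex.norm_I, one_mul, Complex.norm_real, Real.norm_of_nonneg]
    positivity
  · have h_re : z₀.re = w₀.re := by simp [z₀, w₀, UpperHalfPlane.re]
    have h_im : w₀.im ≤ z₀.im := by simpa [z₀, w₀, UpperHalfPlane.im] using hab
    rw [dist_eq_log_div_of_re_eq h_re h_im]
    simp [z₀, w₀, UpperHalfPlane.im]
  · rintro r ⟨z, w, rfl, hw, rfl⟩
    have hw_im : w.im ≤ b := by
      simpa using Complex.im_le_im_add_of_norm_sub_le hw.le
    exact log_div_le_dist_of_im_le hb hw_im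
end
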